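/- arXiv:2110.07945 — 8 statements merged into one kernel-verified Lean document; each statement's English description precedes it below -/
import Mathlib

section
/- For every coloring c : 2^{<ω} → 2 there exist a perfect tree p ⊆ 2^{<ω} and an infinite set A ⊆ ω such that c is constant on p↾A. Equivalently, the family [ω]^ω of all infinite subsets of ω is a Halpern–Läuchli family. -/
open Set

/-- `p ⊆ 2^{<ω}` is a tree: nonempty, closed under initial segments,
without maximal elements. -/
def IsTree (p : Set (List Bool)) : Prop :=
  p.Nonempty ∧ (∀ s ∈ p, ∀ t : List Bool, t <+: s → t ∈ p) ∧
    ∀ s ∈ p, ∃ t ∈ p, s <+: t ∧ s ≠ t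

/-- `p` is a perfect tree: a tree in which every node has two
incomparable extensions in `p`. -/
def IsPerfectTree (p : Set (List Bool)) : Prop :=
  IsTree p ∧ ∀ s ∈ p, ∃ t₀ ∈ p, ∃ t₁ ∈ p,
    s <+: t₀ ∧ s <+: t₁ ∧ ¬ t₀ <+: t₁ ∧ ¬ t₁ <+: t₀

/-- `p↾A`: the nodes of `p` whose length belongs to `A`. -/
def restrictTree (p : Set (List Bool)) (A : Set ℕ) : Set (List Bool) :=
  {s ∈ p | s.length ∈ A}

/-- `R` is a Halpern–Läuchli family: for every coloring `c : 2^{<ω} → 2`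
there are a perfect tree `p` and `A ∈ R` with `c` constant on `p↾A`. -/
def IsHLFamily (R : Set (Set ℕ)) : Prop :=
  ∀ c : List Bool → Bool, ∃ p : Set (List Bool), ∃ A ∈ R,
    IsPerfectTree p ∧ ∃ i : Bool, ∀ s ∈ restrictTree p A, c s = i

/-- `x ∈ 2^ω` is a branch of `p`. -/
def IsBranch (p : Set (List Bool)) (x : ℕ → Bool) : Prop :=
  ∀ n : ℕ, (List.ofFn fun i : Fin n => x i) ∈ p

/-- `R` is a reaping family. -/
def IsReapingFamily (R : Set (Set ℕ)) : Prop :=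
  ∀ B : Set ℕ, B.Infinite → ∃ A ∈ R, A ⊆ B ∨ A ∩ B = ∅

/-- `I` is an ideal on `X`: contains all finite sets, is proper, and is
closed under subsets and finite unions. -/
def IsIdealOn {X : Type*} (I : Set (Set X)) : Prop :=
  (∀ A : Set X, A.Finite → A ∈ I) ∧ (univ : Set X) ∉ I ∧
    (∀ A B : Set X, A ⊆ B → B ∈ I → A ∈ I) ∧
    ∀ A B : Set X, A ∈ I → B ∈ I → A ∪ B ∈ I

/-- An ideal `I` on `ω` is HL if the family of infinite sets in `I⁺` is
a Halpern–Läuchli family. -/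
def IsHLIdeal (I : Set (Set ℕ)) : Prop :=
  IsHLFamily {A | A ∉ I ∧ A.Infinite}

/-- An ideal on a countable set `X` is HL if its image under some
(equivalently, any) bijection `X ≃ ℕ` is an HL ideal on `ω`. -/
def IsHLIdealOnCountable {X : Type*} (I : Set (Set X)) : Prop :=
  ∃ e : X ≃ ℕ, IsHLIdeal ((fun A : Set X => e '' A) '' I)

/-- The Katětov order on ideals. -/
def KatetovLE {X Y : Type*} (I : Set (Set X)) (J : Set (Set Y)) : Prop :=
  ∃ f : Y → X, ∀ A ∈ I, f ⁻¹' A ∈ J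

/-- The reaping number `𝔯`. -/
noncomputable def frakR : Cardinal :=
  sInf {κ | ∃ R : Set (Set ℕ), (∀ A ∈ R, A.Infinite) ∧ IsReapingFamily R ∧
    κ = Cardinal.mk ↥R}

/-- The density zero ideal `Z`. -/
def densityZero : Set (Set ℕ) :=
  {A | Filter.Tendsto (fun n : ℕ => ((A ∩ Iio n).ncard : ℝ) / (n : ℝ))
    Filter.atTop (nhds 0)}

/-!
Either some node `s` has, for infinitely many `n`, all its extensions of length `n` colored
`true`; then the full cone above `s` is a perfect tree which is monochromatic on those levels.
Or every node has a `false` extension at all sufficiently large lengths, so any finitely many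
nodes have `false` extensions at one common length. A fusion argument then builds a perfect tree
level by level: at stage `k + 1` both one-step extensions of every node of stage `k` are
extended to `false` nodes of one common length `n (k + 1)`, and the tree is monochromatic on
the levels `n k`.
-/

open Filter

namespace HalpernLauchli

lemma not_append_singleton_prefix {t : List Bool} {a b : Bool} (hab : a ≠ b) :
    ¬ t ++ [a] <+: t ++ [b] := by
  rw [List.prefix_append_right_inj]
  cases a <;> cases b <;> simp_all

lemma isPerfectTree_of_forall_exists_split {p : Set (List Bool)} (hne : p.Nonempty)
    (hpre : ∀ s ∈ p, ∀ t, t <+: s → t ∈ p)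
    (hsplit : ∀ s ∈ p, ∃ t, s <+: t ∧ ∀ b, t ++ [b] ∈ p) : IsPerfectTree p := by
  refine ⟨⟨hne, hpre, fun s hs => ?_⟩, fun s hs => ?_⟩
  · obtain ⟨t, hst, ht⟩ := hsplit s hs
    refine ⟨t ++ [false], ht false, hst.trans (List.prefix_append _ _), fun h => ?_⟩
    have := hst.length_le
    simp [h] at this
  · obtain ⟨t, hst, ht⟩ := hsplit s hs
    exact ⟨_, ht false, _, ht true, hst.trans (List.prefix_append _ _),
      hst.trans (List.prefix_append _ _), not_append_singleton_prefix (by decide),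
      not_append_singleton_prefix (by decide)⟩

def cone (s : List Bool) : Set (List Bool) :=
  {t | t <+: s ∨ s <+: t}

lemma isPerfectTree_cone (s : List Bool) : IsPerfectTree (cone s) := by
  refine isPerfectTree_of_forall_exists_split ⟨s, Or.inl List.prefix_rfl⟩ ?_ ?_
  · rintro u (hus | hsu) t htu
    · exact Or.inl (htu.trans hus)
    · exact List.prefix_or_prefix_of_prefix htu hsu
  · rintro u (hus | hsu)
    · exact ⟨s, hus, fun b => Or.inr (List.prefix_append _ _)⟩
    · exact ⟨u, List.prefix_rfl, fun b => Or.inr (hsu.trans (List.prefix_append _ _))⟩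

lemma prefix_of_mem_cone {s t : List Bool} (ht : t ∈ cone s) (hlen : s.length ≤ t.length) :
    s <+: t := by
  rcases ht with hts | hst
  · rw [hts.eq_of_length (le_antisymm hts.length_le hlen)]
  · exact hst

structure IsFusion (Q : List Bool → Prop) (S : ℕ → Finset (List Bool)) (n : ℕ → ℕ) : Prop where
  nonempty : (S 0).Nonempty
  length_eq : ∀ k, ∀ t ∈ S k, t.length = n k
  prop : ∀ k, ∀ t ∈ S k, Q t
  extend : ∀ k, ∀ t ∈ S k, ∀ b, ∃ u ∈ S (k + 1), t ++ [b] <+: u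
  descend : ∀ k, ∀ u ∈ S (k + 1), ∃ t ∈ S k, t <+: u

def downClosure (S : ℕ → Finset (List Bool)) : Set (List Bool) :=
  {u | ∃ k, ∃ t ∈ S k, u <+: t}

namespace IsFusion

variable {Q : List Bool → Prop} {S : ℕ → Finset (List Bool)} {n : ℕ → ℕ}

lemma nonempty_level (hS : IsFusion Q S n) (k : ℕ) : (S k).Nonempty := by
  induction k with
  | zero => exact hS.nonempty
  | succ k ih =>
    obtain ⟨t, ht⟩ := ih
    obtain ⟨u, hu, -⟩ := hS.extend k t ht false
    exact ⟨u, hu⟩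

lemma strictMono (hS : IsFusion Q S n) : StrictMono n := by
  refine strictMono_nat_of_lt_succ fun k => ?_
  obtain ⟨t, ht⟩ := hS.nonempty_level k
  obtain ⟨u, hu, htu⟩ := hS.extend k t ht false
  have := htu.length_le
  simp only [List.length_append, List.length_singleton] at this
  rw [← hS.length_eq k t ht, ← hS.length_eq (k + 1) u hu]
  omega

lemma mem_of_prefix (hS : IsFusion Q S n) {m : ℕ} {t : List Bool} (ht : t ∈ S m) {k : ℕ}
    (hkm : k ≤ m) {u : List Bool} (hut : u <+: t) (hu : u.length = n k) : u ∈ S k := by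
  induction m generalizing t with
  | zero =>
    obtain rfl : k = 0 := Nat.le_zero.mp hkm
    rwa [hut.eq_of_length (hu.trans (hS.length_eq 0 t ht).symm)]
  | succ m ih =>
    rcases hkm.lt_or_eq with hkm | rfl
    · obtain ⟨t', ht', ht't⟩ := hS.descend m t ht
      refine ih ht' (Nat.lt_succ_iff.mp hkm) (List.prefix_of_prefix_length_le hut ht't ?_)
      rw [hu, hS.length_eq m t' ht']
      exact hS.strictMono.monotone (Nat.lt_succ_iff.mp hkm)
    · rwa [hut.eq_of_length (hu.trans (hS.length_eq _ t ht).symm)]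

lemma mem_of_mem_downClosure (hS : IsFusion Q S n) {u : List Bool} (hu : u ∈ downClosure S)
    {k : ℕ} (hlen : u.length = n k) : u ∈ S k := by
  obtain ⟨m, t, ht, hut⟩ := hu
  refine hS.mem_of_prefix ht (hS.strictMono.le_iff_le.mp ?_) hut hlen
  rw [← hlen, ← hS.length_eq m t ht]
  exact hut.length_le

lemma isPerfectTree (hS : IsFusion Q S n) : IsPerfectTree (downClosure S) := by
  obtain ⟨t, ht⟩ := hS.nonempty
  refine isPerfectTree_of_forall_exists_split ⟨t, 0, t, ht, List.prefix_rfl⟩ ?_ ?_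
  · rintro s ⟨k, t, ht, hst⟩ u hus
    exact ⟨k, t, ht, hus.trans hst⟩
  · rintro s ⟨k, t, ht, hst⟩
    refine ⟨t, hst, fun b => ?_⟩
    obtain ⟨u, hu, htu⟩ := hS.extend k t ht b
    exact ⟨k + 1, u, hu, htu⟩

lemma forall_mem_restrictTree (hS : IsFusion Q S n) :
    ∀ s ∈ restrictTree (downClosure S) (range n), Q s := by
  rintro s ⟨hs, k, hk⟩
  exact hS.prop k s (hS.mem_of_mem_downClosure hs hk.symm)

end IsFusion

lemma exists_extension_level {Q : List Bool → Prop}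
    (H : ∀ s, ∀ᶠ n in atTop, ∃ t, s <+: t ∧ t.length = n ∧ Q t) (F : Finset (List Bool)) :
    ∃ n, ∃ G : Finset (List Bool), (∀ u ∈ G, u.length = n ∧ Q u) ∧
      (∀ t ∈ F, ∀ b, ∃ u ∈ G, t ++ [b] <+: u) ∧ ∀ u ∈ G, ∃ t ∈ F, t <+: u := by
  obtain ⟨n, hn⟩ := ((eventually_all_finset F).2 fun t _ =>
    eventually_all.2 fun b => H (t ++ [b])).exists
  choose! f hf using hn
  refine ⟨n, (F ×ˢ Finset.univ).image fun p => f p.1 p.2, ?_, ?_, ?_⟩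
  · simp only [Finset.mem_image, Finset.mem_product, Finset.mem_univ, and_true]
    rintro _ ⟨⟨t, b⟩, ht, rfl⟩
    exact (hf t ht b).2
  · exact fun t ht b => ⟨f t b, Finset.mem_image.2 ⟨(t, b), by simpa using ht, rfl⟩, (hf t ht b).1⟩
  · simp only [Finset.mem_image, Finset.mem_product, Finset.mem_univ, and_true]
    rintro _ ⟨⟨t, b⟩, ht, rfl⟩
    exact ⟨t, ht, (List.prefix_append t [b]).trans (hf t ht b).1⟩

lemma exists_isFusion {Q : List Bool → Prop}
    (H : ∀ s, ∀ᶠ n in atTop, ∃ t, s <+: t ∧ t.length = n ∧ Q t) :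
    ∃ S n, IsFusion Q S n := by
  choose N next hnext hext hdesc using exists_extension_level H
  have hS : ∀ k, next^[k + 1] {[]} = next (next^[k] {[]}) := fun k =>
    Function.iterate_succ_apply' _ _ _
  refine ⟨fun k => next^[k + 1] {[]}, fun k => N (next^[k] {[]}), ⟨?_, ?_, ?_, ?_, ?_⟩⟩
  · obtain ⟨u, hu, -⟩ := hext {[]} [] (Finset.mem_singleton_self _) false
    exact ⟨u, hu⟩
  · intro k t ht
    rw [hS] at ht
    exact (hnext _ t ht).1
  · intro k t ht
    rw [hS] at ht
    exact (hnext _ t ht).2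
  · intro k t ht b
    simpa only [hS (k + 1)] using hext _ t ht b
  · intro k u hu
    rw [hS (k + 1)] at hu
    exact hdesc _ u hu

end HalpernLauchli

open HalpernLauchli in
/-- The Halpern–Läuchli theorem for one tree: the family of all infinite
subsets of `ω` is a Halpern–Läuchli family. -/
theorem stmt0 : ∀ c : List Bool → Bool, ∃ p : Set (List Bool), ∃ A : Set ℕ,
    IsPerfectTree p ∧ A.Infinite ∧ ∃ i : Bool, ∀ s ∈ restrictTree p A, c s = i := by
  intro c
  by_cases H : ∀ s, ∀ᶠ n in atTop, ∃ t, s <+: t ∧ t.length = n ∧ c t = false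
  · obtain ⟨S, n, hS⟩ := exists_isFusion H
    exact ⟨downClosure S, range n, hS.isPerfectTree,
      infinite_range_of_injective hS.strictMono.injective, false, hS.forall_mem_restrictTree⟩
  · push Not at H
    obtain ⟨s, hs⟩ := H
    refine ⟨cone s, {n | s.length ≤ n ∧ ∀ t, s <+: t → t.length = n → c t ≠ false},
      isPerfectTree_cone s, ?_, true, ?_⟩
    · exact Nat.frequently_atTop_iff_infinite.mp (hs.and_eventually (eventually_ge_atTop _))
        |>.mono fun n hn => ⟨hn.2, hn.1⟩
    · rintro t ⟨ht, hlen, htrue⟩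
      simpa using htrue t (prefix_of_mem_cone ht hlen) rfl
end

section
/- Every reaping family R ⊆ [ω]^ω of cardinality strictly less than the continuum 𝔠 = 2^{ℵ₀} is a Halpern–Läuchli family. -/
open Set

/-!
For a colouring `c`, a set `A ∈ R` and a colour `i`, the branches `x ∈ 2^ω` with `c (x↾n) = i` for
all `n ∈ A` form a closed set. If one of these closed sets is uncountable, it contains a nonempty
perfect set, whose tree of initial segments is a perfect tree `p` with `c` constant on `p↾A`.
Otherwise, fewer than `𝔠` countable sets cannot cover `2^ω`, so some branch `x` lies in none of
them; but the reaping family contains some `A` inside `{n | c (x↾n) = true}` or inside its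
complement, which puts `x` into one of the closed sets after all.
-/

universe u

open Cardinal

def initSeg (x : ℕ → Bool) (n : ℕ) : List Bool := List.ofFn fun i : Fin n => x i

@[simp] lemma initSeg_length (x : ℕ → Bool) (n : ℕ) : (initSeg x n).length = n := by
  simp [initSeg]

lemma initSeg_eq_iff {x y : ℕ → Bool} {n : ℕ} :
    initSeg x n = initSeg y n ↔ ∀ i < n, x i = y i := by
  simp [initSeg, List.ofFn_inj, funext_iff, Fin.forall_iff]

lemma take_initSeg (x : ℕ → Bool) {m n : ℕ} (h : m ≤ n) :
    (initSeg x n).take m = initSeg x m := by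
  apply List.ext_getElem <;> simp [initSeg, h]

lemma initSeg_prefix (x : ℕ → Bool) {m n : ℕ} (h : m ≤ n) : initSeg x m <+: initSeg x n :=
  take_initSeg x h ▸ List.take_prefix _ _

lemma eq_initSeg_of_prefix {x : ℕ → Bool} {t : List Bool} {n : ℕ} (h : t <+: initSeg x n) :
    t = initSeg x t.length :=
  (List.prefix_iff_eq_take.1 h).trans (take_initSeg x (by simpa using h.length_le))

lemma setOf_forall_lt_eq_mem_nhds (x : ℕ → Bool) (n : ℕ) :
    {y : ℕ → Bool | ∀ i < n, y i = x i} ∈ nhds x := by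
  have : {y : ℕ → Bool | ∀ i < n, y i = x i} = (Iio n).pi fun i => {x i} := by
    ext y; simp [Set.mem_pi]
  rw [this]
  exact set_pi_mem_nhds (finite_Iio n) fun i _ => by simp

def branchTree (P : Set (ℕ → Bool)) : Set (List Bool) :=
  {s | ∃ x ∈ P, s = initSeg x s.length}

lemma initSeg_mem_branchTree {P : Set (ℕ → Bool)} {x : ℕ → Bool} (hx : x ∈ P) (n : ℕ) :
    initSeg x n ∈ branchTree P := ⟨x, hx, by rw [initSeg_length]⟩

lemma isTree_branchTree {P : Set (ℕ → Bool)} (hP : P.Nonempty) : IsTree (branchTree P) := by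
  obtain ⟨z, hz⟩ := hP
  refine ⟨⟨_, initSeg_mem_branchTree hz 0⟩, ?_, ?_⟩
  · rintro s ⟨x, hx, hs⟩ t ht
    exact eq_initSeg_of_prefix (hs ▸ ht) ▸ initSeg_mem_branchTree hx _
  · rintro s ⟨x, hx, hs⟩
    refine ⟨initSeg x (s.length + 1), initSeg_mem_branchTree hx _, ?_, fun h => ?_⟩
    · exact hs ▸ initSeg_prefix x (by simp)
    · simpa using congrArg List.length h

lemma isPerfectTree_branchTree {P : Set (ℕ → Bool)} (hP : Perfect P) (hne : P.Nonempty) :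
    IsPerfectTree (branchTree P) := by
  refine ⟨isTree_branchTree hne, ?_⟩
  rintro s ⟨x, hx, hs⟩
  set n := s.length
  -- `x` is not isolated in `P`: some `y ∈ P` agrees with `x` below `n` and differs at some `m`.
  obtain ⟨y, ⟨hyx, hy⟩, hne⟩ :=
    accPt_iff_nhds.1 (hP.acc x hx) _ (setOf_forall_lt_eq_mem_nhds x n)
  obtain ⟨m, hm⟩ := Function.ne_iff.1 hne
  have hnm : n ≤ m := not_lt.1 fun h => hm (hyx m h)
  have hxy : initSeg x (m + 1) ≠ initSeg y (m + 1) := fun h =>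
    hm (initSeg_eq_iff.1 h m m.lt_succ_self).symm
  refine ⟨initSeg x (m + 1), initSeg_mem_branchTree hx _, initSeg y (m + 1),
    initSeg_mem_branchTree hy _, hs ▸ initSeg_prefix x (by omega), ?_,
    fun h => hxy (h.eq_of_length (by simp)), fun h => hxy (h.eq_of_length (by simp)).symm⟩
  rw [hs, initSeg_eq_iff.2 fun i hi => (hyx i hi).symm]
  exact initSeg_prefix y (by omega)

def monoBranches (c : List Bool → Bool) (A : Set ℕ) (i : Bool) : Set (ℕ → Bool) :=
  {x | ∀ n ∈ A, c (initSeg x n) = i}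

lemma isClosed_monoBranches (c : List Bool → Bool) (A : Set ℕ) (i : Bool) :
    IsClosed (monoBranches c A i) := by
  have : monoBranches c A i = ⋂ n ∈ A, {x | c (initSeg x n) = i} := by
    ext x; simp [monoBranches]
  rw [this]
  refine isClosed_biInter fun n _ => isOpen_compl_iff.1 <| isOpen_iff_mem_nhds.2 fun x hx => ?_
  filter_upwards [setOf_forall_lt_eq_mem_nhds x n] with y hy
  show c (initSeg y n) ≠ i
  rwa [initSeg_eq_iff.2 hy]

lemma exists_perfectTree_of_not_countable_monoBranches {c : List Bool → Bool} {A : Set ℕ}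
    {i : Bool} (h : ¬(monoBranches c A i).Countable) :
    ∃ p, IsPerfectTree p ∧ ∀ s ∈ restrictTree p A, c s = i := by
  obtain ⟨D, hD, hDne, hDsub⟩ :=
    exists_perfect_nonempty_of_isClosed_of_not_countable (isClosed_monoBranches c A i) h
  refine ⟨branchTree D, isPerfectTree_branchTree hD hDne, ?_⟩
  rintro s ⟨⟨x, hx, hs⟩, hA⟩
  exact hs ▸ hDsub hx _ hA

lemma mk_iUnion_lt_continuum {α ι : Type u} {S : ι → Set α} (hι : #ι < 𝔠)
    (hS : ∀ i, (S i).Countable) : #(⋃ i, S i) < 𝔠 :=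
  calc #(⋃ i, S i) ≤ #ι * ⨆ i, #(S i) := mk_iUnion_le S
    _ ≤ #ι * ℵ₀ := by gcongr; exact ciSup_le' fun i => (hS i).le_aleph0
    _ < 𝔠 := mul_lt_of_lt aleph0_le_continuum hι aleph0_lt_continuum

lemma IsReapingFamily.exists_subset_or_subset_compl {R : Set (Set ℕ)} (hR : IsReapingFamily R)
    (B : Set ℕ) : ∃ A ∈ R, A ⊆ B ∨ A ⊆ Bᶜ := by
  rcases B.finite_or_infinite with hB | hB
  · obtain ⟨A, hA, h | h⟩ := hR _ hB.infinite_compl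
    · exact ⟨A, hA, .inr h⟩
    · exact ⟨A, hA, .inl (sdiff_eq_empty.1 h)⟩
  · obtain ⟨A, hA, h | h⟩ := hR _ hB
    · exact ⟨A, hA, .inl h⟩
    · exact ⟨A, hA, .inr (subset_compl_iff_disjoint_right.2 (disjoint_iff_inter_eq_empty.2 h))⟩

theorem stmt2_general (R : Set (Set ℕ))
    (hreap : IsReapingFamily R) (hcard : Cardinal.mk ↥R < Cardinal.continuum) :
    IsHLFamily R := by
  intro c
  by_cases hunc : ∃ A ∈ R, ∃ i, ¬(monoBranches c A i).Countable
  · obtain ⟨A, hA, i, hi⟩ := hunc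
    obtain ⟨p, hp, hpA⟩ := exists_perfectTree_of_not_countable_monoBranches hi
    exact ⟨p, A, hA, hp, i, hpA⟩
  push Not at hunc
  set S : R → Set (ℕ → Bool) := fun A => monoBranches c A true ∪ monoBranches c A false
  have hS : #(⋃ A, S A) < #(ℕ → Bool) := by
    simpa using mk_iUnion_lt_continuum hcard fun A => (hunc A A.2 true).union (hunc A A.2 false)
  obtain ⟨x, hx⟩ : ∃ x, x ∉ ⋃ A, S A := by
    by_contra! hcover
    exact hS.not_ge (by rw [eq_univ_of_forall hcover, mk_univ])
  obtain ⟨A, hA, hAx | hAx⟩ :=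
    hreap.exists_subset_or_subset_compl {n | c (initSeg x n) = true}
  · exact (hx (mem_iUnion.2 ⟨⟨A, hA⟩, .inl hAx⟩)).elim
  · exact (hx (mem_iUnion.2 ⟨⟨A, hA⟩, .inr fun n hn => by simpa using hAx hn⟩)).elim

/-- Every reaping family of size less than the continuum is Halpern–Läuchli. -/
theorem stmt2 (R : Set (Set ℕ)) (hR : ∀ A ∈ R, A.Infinite)
    (hreap : IsReapingFamily R) (hcard : Cardinal.mk ↥R < Cardinal.continuum) :
    IsHLFamily R :=
  stmt2_general R hreap hcard
end

section
/- Let R ⊆ [ω]^ω be a family of cardinality strictly less than 𝔯. Then there exists a countably infinite family S ⊆ [ω]^ω of pairwise disjoint infinite subsets of ω such that A ∩ S is infinite for every A ∈ R and every S ∈ S. -/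
open Set

/-! Below `𝔯` every family of infinite sets is split by a single set: otherwise the finite
modifications of its members would form a reaping family of the same size, and `𝔯 > ℵ₀`
since a countable family of infinite sets is always split. Splitting `ω` by a splitter `B₀`,
then `ω \ B₀` by a splitter `B₁` of the traces of the family on it, and so on, yields the
pairwise disjoint pieces `(ω \ (B₀ ∪ ⋯ ∪ Bₙ₋₁)) ∩ Bₙ`, each meeting every member infinitely. -/

open Function

theorem exists_strictMono_forall_mem (f : ℕ → Set ℕ) (hf : ∀ n, (f n).Infinite) :
    ∃ z : ℕ → ℕ, StrictMono z ∧ ∀ n, z n ∈ f n := by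
  choose g hg hgt using fun n (m : ℕ) => (hf n).exists_gt m
  let z : ℕ → ℕ := fun n => Nat.rec (g 0 0) (fun n zn => g (n + 1) zn) n
  refine ⟨z, strictMono_nat_of_lt_succ fun n => hgt (n + 1) (z n), fun n => ?_⟩
  cases n with
  | zero => exact hg 0 0
  | succ n => exact hg (n + 1) (z n)

theorem IsReapingFamily.not_countable {R : Set (Set ℕ)} (hR : ∀ A ∈ R, A.Infinite)
    (hreap : IsReapingFamily R) : ¬ R.Countable := by
  intro hcount
  obtain ⟨A, hA, -⟩ := hreap univ infinite_univ
  obtain ⟨f, rfl⟩ := hcount.exists_eq_range ⟨A, hA⟩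
  obtain ⟨z, hz, hzf⟩ := exists_strictMono_forall_mem (fun m => f (m / 2))
    fun m => hR _ (mem_range_self _)
  -- `f n` contains both `z (2 * n)` and `z (2 * n + 1)`, so it is split by the even-indexed `z`s.
  have hzf' : ∀ n, z (2 * n) ∈ f n ∧ z (2 * n + 1) ∈ f n := fun n =>
    ⟨by simpa using hzf (2 * n), by simpa [Nat.add_div_of_dvd_right] using hzf (2 * n + 1)⟩
  obtain ⟨_, ⟨n, rfl⟩, hsub | hdisj⟩ := hreap (range fun n => z (2 * n))
    (infinite_range_of_injective fun a b hab => by simpa using hz.injective hab)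
  · obtain ⟨m, hm⟩ := hsub (hzf' n).2
    have := hz.injective hm
    omega
  · exact (eq_empty_iff_forall_notMem.1 hdisj) _ ⟨(hzf' n).1, n, rfl⟩

theorem frakR_le_mk {R : Set (Set ℕ)} (hR : ∀ A ∈ R, A.Infinite) (hreap : IsReapingFamily R) :
    frakR ≤ Cardinal.mk R :=
  csInf_le' ⟨R, hR, hreap, rfl⟩

theorem aleph0_lt_frakR : Cardinal.aleph0 < frakR := by
  obtain ⟨R, hR, hreap, hfrakR⟩ : frakR ∈ {κ | ∃ R : Set (Set ℕ), (∀ A ∈ R, A.Infinite) ∧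
      IsReapingFamily R ∧ κ = Cardinal.mk R} :=
    csInf_mem ⟨_, {A | A.Infinite}, fun _ hA => hA, fun B hB => ⟨B, hB, Or.inl subset_rfl⟩, rfl⟩
  rw [hfrakR, lt_iff_not_ge, Cardinal.mk_le_aleph0_iff, countable_coe_iff]
  exact hreap.not_countable hR

theorem exists_split_of_mk_lt_frakR {F : Set (Set ℕ)} (hF : ∀ A ∈ F, A.Infinite)
    (hcard : Cardinal.mk F < frakR) :
    ∃ B : Set ℕ, ∀ A ∈ F, (A ∩ B).Infinite ∧ (A \ B).Infinite := by
  by_contra! hnosplit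
  let G : Set (Set ℕ) :=
    {A' ∈ range fun p : F × Finset ℕ => (p.1 : Set ℕ) \ p.2 | A'.Infinite}
  have hGreap : IsReapingFamily G := by
    intro B _
    obtain ⟨A, hA, hAB⟩ := hnosplit B
    by_cases hinter : (A ∩ B).Infinite
    · have hdiff := hAB hinter
      refine ⟨A ∩ B, ⟨⟨(⟨A, hA⟩, hdiff.toFinset), ?_⟩, hinter⟩, Or.inl inter_subset_right⟩
      simp
    · have hfin := not_infinite.1 hinter
      refine ⟨A \ B, ⟨⟨(⟨A, hA⟩, hfin.toFinset), ?_⟩, ?_⟩, Or.inr ?_⟩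
      · simp
      · simpa using (hF A hA).sdiff hfin
      · simp
  have hGcard : Cardinal.mk G < frakR :=
    calc Cardinal.mk G ≤ Cardinal.mk (F × Finset ℕ) :=
          (Cardinal.mk_le_mk_of_subset fun _ h => h.1).trans Cardinal.mk_range_le
      _ = Cardinal.mk F * Cardinal.aleph0 := by simp [Cardinal.mk_prod]
      _ < frakR := Cardinal.mul_lt_of_lt aleph0_lt_frakR.le hcard aleph0_lt_frakR
  exact (frakR_le_mk (fun _ h => h.2) hGreap).not_gt hGcard

theorem exists_split_inter_of_mk_lt_frakR {F : Set (Set ℕ)} (hcard : Cardinal.mk F < frakR)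
    {C : Set ℕ} (hC : ∀ A ∈ F, (A ∩ C).Infinite) :
    ∃ B : Set ℕ, (∀ A ∈ F, (A ∩ (C ∩ B)).Infinite) ∧ ∀ A ∈ F, (A ∩ (C \ B)).Infinite := by
  obtain ⟨B, hB⟩ := exists_split_of_mk_lt_frakR (F := (· ∩ C) '' F)
    (by rintro _ ⟨A, hA, rfl⟩; exact hC A hA) (Cardinal.mk_image_le.trans_lt hcard)
  exact ⟨B, fun A hA => by simpa [inter_assoc] using (hB _ ⟨A, hA, rfl⟩).1,
    fun A hA => by simpa [inter_sdiff_assoc] using (hB _ ⟨A, hA, rfl⟩).2⟩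

theorem exists_pairwise_disjoint_of_forall_split {α : Type*} (P : Set α → Prop) (huniv : P univ)
    (hsplit : ∀ C, P C → ∃ B, P (C ∩ B) ∧ P (C \ B)) :
    ∃ S : ℕ → Set α, (∀ n, P (S n)) ∧ Pairwise (Disjoint on S) := by
  choose B hBin hBout using hsplit
  let C : ℕ → {C // P C} :=
    fun n => Nat.rec ⟨univ, huniv⟩ (fun _ c => ⟨c.1 \ B c.1 c.2, hBout _ c.2⟩) n
  have hanti : Antitone fun n => (C n).1 := antitone_nat_of_succ_le fun _ => sdiff_subset
  refine ⟨fun n => (C n).1 ∩ B _ (C n).2, fun n => hBin _ _, ?_⟩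
  refine (pairwise_disjoint_on _).2 fun m n hmn => ?_
  have hCn : (C n).1 ⊆ (C m).1 \ B _ (C m).2 := hanti (Nat.succ_le_of_lt hmn)
  exact disjoint_sdiff_right.mono inter_subset_right (inter_subset_left.trans hCn)

/-- A family of size `< 𝔯` admits a countably infinite pairwise disjoint
family of infinite sets each meeting every member of `R` infinitely. -/
theorem stmt3 (R : Set (Set ℕ)) (hR : ∀ A ∈ R, A.Infinite)
    (hcard : Cardinal.mk ↥R < frakR) :
    ∃ S : Set (Set ℕ), S.Countable ∧ S.Infinite ∧ (∀ s ∈ S, s.Infinite) ∧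
      S.Pairwise (fun s t => Disjoint s t) ∧
      ∀ A ∈ R, ∀ s ∈ S, (A ∩ s).Infinite := by
  -- Adding `univ` makes every piece infinite.
  set R' := insert univ R
  have hR' : ∀ A ∈ R', A.Infinite := by
    rintro A (rfl | hA)
    exacts [infinite_univ, hR A hA]
  have hcard' : Cardinal.mk R' < frakR :=
    Cardinal.mk_insert_le.trans_lt <| Cardinal.add_lt_of_lt aleph0_lt_frakR.le hcard <|
      Cardinal.one_lt_aleph0.trans aleph0_lt_frakR
  obtain ⟨S, hS, hdisj⟩ := exists_pairwise_disjoint_of_forall_split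
    (fun C => ∀ A ∈ R', (A ∩ C).Infinite) (by simpa using hR')
    fun _ => exists_split_inter_of_mk_lt_frakR hcard'
  have hSinf : ∀ n, (S n).Infinite := fun n => by simpa using hS n univ (mem_insert _ _)
  have hSinj : Injective S := injective_iff_pairwise_ne.2 <|
    hdisj.mono fun i _ hij heq => by
      obtain ⟨x, hx⟩ := (hSinf i).nonempty
      exact disjoint_left.1 hij hx (heq ▸ hx)
  refine ⟨range S, countable_range S, infinite_range_of_injective hSinj, ?_,
    hdisj.range_pairwise, ?_⟩
  · rintro _ ⟨n, rfl⟩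
    exact hSinf n
  · rintro A hA _ ⟨n, rfl⟩
    exact hS n A (mem_insert_of_mem _ hA)
end

section
/- Let I and J be ideals on ω with I ≤_K J. If J is an HL ideal, then I is an HL ideal. -/
open Set

/-! Let `f` witness `I ≤_K J` and let `d` be strictly increasing with `f ≤ d`. The map `spread d`
copies bit `j` of a node to position `d j` and fills the other positions with `false`; it is an
embedding for the prefix order, so it carries a perfect tree `p` to a perfect tree. Pull a colouring
`c` back to `s ↦ c ((spread d s).take (f s.length))` and take `p` and `B ∈ J⁺` monochromatic for it.
Then `f '' B ∈ I⁺`, and a node of length `f n` in the tree generated by `spread d '' p` is the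
`f n`-prefix of the spread of a node of `p` of length `n`, because `f n ≤ d n`; hence `c` is
constant on that level. -/

theorem exists_strictMono_ge (f : ℕ → ℕ) : ∃ d : ℕ → ℕ, StrictMono d ∧ ∀ n, f n ≤ d n := by
  refine ⟨fun n => ∑ k ∈ Finset.range (n + 1), (f k + 1), strictMono_nat_of_lt_succ fun n => ?_,
    fun n => ?_⟩
  · rw [Finset.sum_range_succ _ (n + 1)]
    omega
  · have := Finset.single_le_sum (f := fun k => f k + 1) (fun _ _ => Nat.zero_le _)
      (Finset.self_mem_range_succ n)
    dsimp only
    omega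

open Classical in
noncomputable def spread (d : ℕ → ℕ) (s : List Bool) : List Bool :=
  List.ofFn fun m : Fin (d s.length) => decide (∃ j, d j = m ∧ s.getD j false = true)

@[simp]
theorem length_spread (d : ℕ → ℕ) (s : List Bool) : (spread d s).length = d s.length :=
  List.length_ofFn

theorem getElem_spread_apply {d : ℕ → ℕ} (hd : StrictMono d) {s : List Bool} {j : ℕ} (hj : j < s.length) :
    (spread d s)[d j]'(by simpa using hd hj) = s[j] := by
  simp only [spread, List.getElem_ofFn, hd.injective.eq_iff, exists_eq_left,
    List.getD_eq_getElem _ _ hj, Bool.decide_eq_true]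

theorem spread_prefix_spread_iff {d : ℕ → ℕ} (hd : StrictMono d) {s t : List Bool} :
    spread d s <+: spread d t ↔ s <+: t := by
  simp only [List.prefix_iff_getElem, length_spread, hd.le_iff_le]
  constructor
  · rintro ⟨hlen, h⟩
    refine ⟨hlen, fun j hj => ?_⟩
    have := h (d j) (by simpa using hd hj)
    rwa [getElem_spread_apply hd hj, getElem_spread_apply hd (hj.trans_le hlen)] at this
  · rintro ⟨hlen, h⟩
    refine ⟨hlen, fun m hm => ?_⟩
    simp only [spread, List.getElem_ofFn]
    refine decide_eq_decide.mpr <| exists_congr fun j => and_congr_right fun hjm => ?_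
    have hj : j < s.length := hd.lt_iff_lt.mp (hjm ▸ hm)
    rw [List.getD_eq_getElem _ _ hj, List.getD_eq_getElem _ _ (hj.trans_le hlen), h j hj]

def prefixClosure (S : Set (List Bool)) : Set (List Bool) :=
  {t | ∃ s ∈ S, t <+: s}

theorem isPerfectTree_of_split {p : Set (List Bool)} (hne : p.Nonempty)
    (hdown : ∀ s ∈ p, ∀ t : List Bool, t <+: s → t ∈ p)
    (hsplit : ∀ s ∈ p, ∃ t₀ ∈ p, ∃ t₁ ∈ p, s <+: t₀ ∧ s <+: t₁ ∧ ¬ t₀ <+: t₁ ∧ ¬ t₁ <+: t₀) :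
    IsPerfectTree p := by
  refine ⟨⟨hne, hdown, fun s hs => ?_⟩, hsplit⟩
  obtain ⟨t₀, ht₀, t₁, ht₁, h₀, h₁, h01, -⟩ := hsplit s hs
  by_cases hs₀ : s = t₀
  · exact ⟨t₁, ht₁, h₁, fun hs₁ => h01 (hs₀ ▸ hs₁ ▸ List.prefix_refl _)⟩
  · exact ⟨t₀, ht₀, h₀, hs₀⟩

theorem IsPerfectTree.prefixClosure_image {p : Set (List Bool)} (hp : IsPerfectTree p)
    {φ : List Bool → List Bool} (hφ : ∀ s t, φ s <+: φ t ↔ s <+: t) :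
    IsPerfectTree (prefixClosure (φ '' p)) := by
  refine isPerfectTree_of_split ?_ ?_ ?_
  · obtain ⟨s, hs⟩ := hp.1.1
    exact ⟨φ s, ⟨φ s, ⟨s, hs, rfl⟩, List.prefix_refl _⟩⟩
  · rintro u ⟨v, hv, huv⟩ t htu
    exact ⟨v, hv, htu.trans huv⟩
  · rintro u ⟨_, ⟨s, hs, rfl⟩, hus⟩
    obtain ⟨t₀, ht₀, t₁, ht₁, h₀, h₁, h01, h10⟩ := hp.2 s hs
    exact ⟨φ t₀, ⟨_, ⟨t₀, ht₀, rfl⟩, List.prefix_refl _⟩, φ t₁, ⟨_, ⟨t₁, ht₁, rfl⟩,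
      List.prefix_refl _⟩, hus.trans ((hφ _ _).2 h₀), hus.trans ((hφ _ _).2 h₁),
      by rwa [hφ], by rwa [hφ]⟩

theorem IsTree.exists_extension_length_ge {p : Set (List Bool)} (hp : IsTree p)
    {s : List Bool} (hs : s ∈ p) (n : ℕ) : ∃ t ∈ p, s <+: t ∧ n ≤ t.length := by
  induction n with
  | zero => exact ⟨s, hs, List.prefix_refl _, Nat.zero_le _⟩
  | succ n ih =>
    obtain ⟨t, ht, hst, hn⟩ := ih
    obtain ⟨u, hu, htu, hne⟩ := hp.2.2 t ht
    have : t.length < u.length := lt_of_le_of_ne htu.length_le (mt htu.eq_of_length hne)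
    exact ⟨u, hu, hst.trans htu, by omega⟩

theorem IsTree.exists_take_spread_eq {p : Set (List Bool)} (hp : IsTree p) {d : ℕ → ℕ}
    (hd : StrictMono d) {s t : List Bool} (hs : s ∈ p) (ht : t <+: spread d s) {n : ℕ}
    (hn : t.length ≤ d n) : ∃ s' ∈ p, s'.length = n ∧ (spread d s').take t.length = t := by
  obtain ⟨u, hu, hsu, hnu⟩ := hp.exists_extension_length_ge hs n
  have hun : (u.take n).length = n := by simpa using hnu
  have htu : t <+: spread d u := ht.trans ((spread_prefix_spread_iff hd).2 hsu)
  have hunu : spread d (u.take n) <+: spread d u :=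
    (spread_prefix_spread_iff hd).2 (List.take_prefix n u)
  have htun : t <+: spread d (u.take n) :=
    List.prefix_of_prefix_length_le htu hunu (by rwa [length_spread, hun])
  exact ⟨u.take n, hp.2.1 u hu _ (List.take_prefix n u), hun,
    (List.prefix_iff_eq_take.1 htun).symm⟩

theorem image_notMem_of_notMem {X Y : Type*} {I : Set (Set X)} {J : Set (Set Y)}
    (hJ : IsIdealOn J) {f : Y → X} (hf : ∀ A ∈ I, f ⁻¹' A ∈ J) {B : Set Y} (hB : B ∉ J) :
    f '' B ∉ I :=
  fun hfB => hB (hJ.2.2.1 _ _ (Set.subset_preimage_image f B) (hf _ hfB))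

theorem infinite_of_notMem_ideal {X : Type*} {I : Set (Set X)} (hI : IsIdealOn I)
    {A : Set X} (hA : A ∉ I) : A.Infinite :=
  fun hfin => hA (hI.1 A hfin)

/-- The HL property is downward closed in the Katětov order. -/
theorem stmt6 (I J : Set (Set ℕ)) (hI : IsIdealOn I) (hJ : IsIdealOn J)
    (hK : KatetovLE I J) (hHL : IsHLIdeal J) : IsHLIdeal I := by
  obtain ⟨f, hf⟩ := hK
  obtain ⟨d, hd, hfd⟩ := exists_strictMono_ge f
  intro c
  obtain ⟨p, B, ⟨hB, -⟩, hp, i, hc⟩ := hHL fun s => c ((spread d s).take (f s.length))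
  have hfB : f '' B ∉ I := image_notMem_of_notMem hJ hf hB
  refine ⟨prefixClosure (spread d '' p), f '' B, ⟨hfB, infinite_of_notMem_ideal hI hfB⟩,
    hp.prefixClosure_image fun _ _ => spread_prefix_spread_iff hd, i, ?_⟩
  rintro t ⟨⟨_, ⟨s, hs, rfl⟩, hts⟩, n, hnB, hnt⟩
  obtain ⟨s', hs', rfl, hs't⟩ := hp.1.exists_take_spread_eq hd hs hts (hnt ▸ hfd n)
  rw [← hs't, ← hnt]
  exact hc s' ⟨hs', hnB⟩
end

section
/- Every ideal on ω that is an F_σ subset of P(ω) (identified with the Cantor space 2^ω via characteristic functions) is an HL ideal. -/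
open Set

/-- The characteristic function of `A ⊆ ω` as an element of `2^ω`. -/
noncomputable def charFun (A : Set ℕ) : ℕ → Bool :=
  fun n => @decide (n ∈ A) (Classical.propDecidable _)


/-!
Write the F_σ ideal as `I = ⋃ₙ Fₙ`. A set belongs to `I` iff it lies below a point of some `Fₙ`,
so by compactness of `2^ω` a set is `I`-positive iff for every `n` it has a finite subset lying
below no point of `Fₙ`. Call a finite set `S` of nodes `i`-good if for every `n` there is such a
finite set `E` of heights above `S` with every node of `S` extending to a node whose initial
segments of all heights in `E` have color `i`.

Some color `i` and node `r` make every finite set of extensions of `r` `i`-good. Otherwise take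
a bad set `S₀` for `false` and, above each `s`, a bad set `Sₛ` for `true`, all below a height `L`,
and sort the heights `ℓ > L` by the pattern `v ↦ c (v padded to height ℓ)` on the nodes `v` of
height `L`: some pattern `ε` occurs on a positive set of heights. If every node of `S₀` extends
to some `v` with `ε v = false`, then `S₀` is `false`-good; otherwise `ε = true` above some
`s ∈ S₀`, and `Sₛ` is `true`-good.

A fusion argument then builds finite levels `Tₘ` above `r`, every node of `Tₘ` splitting into two
nodes of `Tₘ₊₁`, and between them a finite set `Eₘ` of heights, lying below no point of `Fₘ`, at
which all of `Tₘ₊₁` has color `i`. The levels generate a perfect tree, `⋃ₘ Eₘ` is positive, and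
`c` is constantly `i` on the tree restricted to it.
-/

lemma charFun_eq_true {A : Set ℕ} {m : ℕ} : charFun A m = true ↔ m ∈ A := by
  simp [charFun]

lemma List.take_rightpad {α : Type*} {l : List α} {a : α} {k n : ℕ} (hl : l.length ≤ k)
    (hk : k ≤ n) : (l.rightpad n a).take k = l.rightpad k a := by
  simp only [List.rightpad, List.take_append, List.take_replicate]
  rw [List.take_of_length_le (by omega)]
  congr 2
  omega

lemma List.eq_of_append_singleton_prefix {α : Type*} {l w : List α} {a b : α}
    (ha : l ++ [a] <+: w) (hb : l ++ [b] <+: w) : a = b := by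
  simpa using (List.prefix_of_prefix_length_le ha hb (by simp)).eq_of_length (by simp)

namespace IsIdealOn

variable {X : Type*} {I : Set (Set X)}

lemma biUnion_mem (hI : IsIdealOn I) {ι : Type*} (s : Finset ι) {f : ι → Set X}
    (hf : ∀ j ∈ s, f j ∈ I) : ⋃ j ∈ s, f j ∈ I := by
  classical
  induction s using Finset.induction_on with
  | empty => simpa using hI.1 ∅ finite_empty
  | insert a s _ ih =>
    rw [Finset.set_biUnion_insert]
    exact hI.2.2.2 _ _ (hf a (Finset.mem_insert_self a s))
      (ih fun j hj => hf j (Finset.mem_insert_of_mem hj))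

lemma notMem_of_finite_compl (hI : IsIdealOn I) {A : Set X} (hA : Aᶜ.Finite) : A ∉ I :=
  fun h => hI.2.1 (union_compl_self A ▸ hI.2.2.2 _ _ h (hI.1 _ hA))

lemma exists_inter_fiber_notMem (hI : IsIdealOn I) {α : Type*} [Fintype α] (f : X → α)
    {A : Set X} (hA : A ∉ I) : ∃ a, A ∩ f ⁻¹' {a} ∉ I := by
  by_contra! h
  refine hA (hI.2.2.1 _ _ (fun x hx => ?_) (hI.biUnion_mem Finset.univ fun a _ => h a))
  exact mem_iUnion₂.2 ⟨f x, Finset.mem_univ _, hx, rfl⟩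

end IsIdealOn

def coveredBy (C : Set (ℕ → Bool)) : Set (Set ℕ) :=
  {A | ∃ x ∈ C, ∀ m ∈ A, x m = true}

lemma exists_finset_notMem_coveredBy {C : Set (ℕ → Bool)} (hC : IsClosed C) {A : Set ℕ}
    (hA : A ∉ coveredBy C) : ∃ E : Finset ℕ, ↑E ⊆ A ∧ ↑E ∉ coveredBy C := by
  have hempty : C ∩ ⋂ a : A, {x | x a = true} = ∅ :=
    eq_empty_of_forall_notMem fun x ⟨hxC, hx⟩ =>
      hA ⟨x, hxC, fun m hm => mem_iInter.1 hx ⟨m, hm⟩⟩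
  obtain ⟨u, hu⟩ := hC.isCompact.elim_finite_subfamily_closed _
    (fun a => isClosed_eq (continuous_apply _) continuous_const) hempty
  refine ⟨u.map (Function.Embedding.subtype _), by simp, fun ⟨x, hxC, hx⟩ => ?_⟩
  refine eq_empty_iff_forall_notMem.1 hu x ⟨hxC, mem_iInter₂.2 fun a ha => hx a ?_⟩
  exact Finset.mem_coe.2 (Finset.mem_map_of_mem _ ha)

lemma notMem_iff_forall_exists_finset {I : Set (Set ℕ)} (hI : IsIdealOn I)
    {F : ℕ → Set (ℕ → Bool)} (hF : ∀ n, IsClosed (F n)) (hIF : charFun '' I = ⋃ n, F n)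
    {A : Set ℕ} : A ∉ I ↔ ∀ n, ∃ E : Finset ℕ, ↑E ⊆ A ∧ ↑E ∉ coveredBy (F n) := by
  refine ⟨fun hA n => exists_finset_notMem_coveredBy (hF n) ?_, fun h hA => ?_⟩
  · rintro ⟨x, hx, hAx⟩
    obtain ⟨B, hB, rfl⟩ : x ∈ charFun '' I := hIF ▸ mem_iUnion_of_mem n hx
    exact hA (hI.2.2.1 A B (fun m hm => charFun_eq_true.1 (hAx m hm)) hB)
  · obtain ⟨n, hn⟩ := mem_iUnion.1 (hIF ▸ mem_image_of_mem charFun hA)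
    obtain ⟨E, hEA, hE⟩ := h n
    exact hE ⟨charFun A, hn, fun m hm => charFun_eq_true.2 (hEA hm)⟩

def IsGood (c : List Bool → Bool) (K : ℕ → Set (Set ℕ)) (i : Bool) (S : Finset (List Bool)) :
    Prop :=
  ∀ n, ∃ E : Finset ℕ, ↑E ∉ K n ∧ ∀ s ∈ S, ∃ t, s <+: t ∧
    ∀ ℓ ∈ E, s.length < ℓ ∧ ℓ < t.length ∧ c (t.take ℓ) = i

lemma isGood_of_pattern {c : List Bool → Bool} {K : ℕ → Set (Set ℕ)} {L : ℕ}
    {ε : List.Vector Bool L → Bool} {P : Set ℕ} (hP : ∀ n, ∃ E : Finset ℕ, ↑E ⊆ P ∧ ↑E ∉ K n)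
    (hPε : ∀ ℓ ∈ P, L < ℓ ∧ ∀ v : List.Vector Bool L, c (v.1.rightpad ℓ false) = ε v)
    {i : Bool} {S : Finset (List Bool)} (hS : ∀ s ∈ S, ∃ v, s <+: v.1 ∧ ε v = i) :
    IsGood c K i S := by
  intro n
  obtain ⟨E, hEP, hE⟩ := hP n
  refine ⟨E, hE, fun s hs => ?_⟩
  obtain ⟨v, hsv, hv⟩ := hS s hs
  refine ⟨v.1.rightpad (E.sup id + 1) false, hsv.trans (List.prefix_append _ _), fun ℓ hℓ => ?_⟩
  obtain ⟨hLℓ, hcolor⟩ := hPε ℓ (hEP hℓ)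
  have hℓE : ℓ ≤ E.sup id := Finset.le_sup (f := id) hℓ
  have hsL : s.length ≤ L := v.2 ▸ hsv.length_le
  refine ⟨by omega, by simp; omega, ?_⟩
  rw [List.take_rightpad (by rw [v.2]; omega) (by omega), hcolor v, hv]

lemma exists_isGood {I : Set (Set ℕ)} (hI : IsIdealOn I) {K : ℕ → Set (Set ℕ)}
    (hK : ∀ A, A ∉ I → ∀ n, ∃ E : Finset ℕ, ↑E ⊆ A ∧ ↑E ∉ K n) (c : List Bool → Bool) :
    ∃ i r, ∀ S : Finset (List Bool), (∀ s ∈ S, r <+: s) → IsGood c K i S := by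
  classical
  by_contra! hbad
  obtain ⟨S₀, -, hS₀⟩ := hbad false []
  choose SS hSS hSSbad using hbad true
  set L := (S₀ ∪ S₀.biUnion SS).sup List.length
  let pattern (ℓ : ℕ) (v : List.Vector Bool L) : Bool := c (v.1.rightpad ℓ false)
  obtain ⟨ε, hε⟩ := hI.exists_inter_fiber_notMem pattern
    (hI.notMem_of_finite_compl (A := Ioi L) (by simp))
  have hP := hK _ hε
  have hPε : ∀ ℓ ∈ Ioi L ∩ pattern ⁻¹' {ε}, L < ℓ ∧ ∀ v, pattern ℓ v = ε v :=
    fun ℓ ⟨hℓ, hf⟩ => ⟨hℓ, congrFun hf⟩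
  by_cases h : ∀ s ∈ S₀, ∃ v : List.Vector Bool L, s <+: v.1 ∧ ε v = false
  · exact hS₀ (isGood_of_pattern hP hPε h)
  · push Not at h
    obtain ⟨s, hs, hsε⟩ := h
    refine hSSbad s (isGood_of_pattern hP hPε fun u hu => ?_)
    have huL : u.length ≤ L :=
      Finset.le_sup (f := List.length) (Finset.mem_union_right _ (Finset.mem_biUnion.2 ⟨s, hs, hu⟩))
    refine ⟨⟨u.rightpad L false, by simp [huL]⟩, List.prefix_append _ _, ?_⟩
    simpa using hsε _ ((hSS s u hu).trans (List.prefix_append _ _))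

def children (S : Finset (List Bool)) : Finset (List Bool) :=
  Finset.image₂ (fun s b => s ++ [b]) S Finset.univ

lemma mem_children {S : Finset (List Bool)} {t : List Bool} :
    t ∈ children S ↔ ∃ s ∈ S, ∃ b, s ++ [b] = t := by
  simp only [children, Finset.mem_image₂, Finset.mem_univ, true_and]

lemma prefix_of_mem_children {r : List Bool} {S : Finset (List Bool)} (hS : ∀ s ∈ S, r <+: s) :
    ∀ u ∈ children S, r <+: u := by
  intro u hu
  obtain ⟨s, hs, b, rfl⟩ := mem_children.1 hu
  exact (hS s hs).trans (List.prefix_append _ _)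

def fusionLevels (r : List Bool) (g : ℕ → Finset (List Bool) → List Bool → List Bool) :
    ℕ → Finset (List Bool)
  | 0 => {r}
  | m + 1 => (children (fusionLevels r g m)).image (g m (children (fusionLevels r g m)))

lemma mem_fusionLevels_succ {r : List Bool} {g : ℕ → Finset (List Bool) → List Bool → List Bool}
    {m : ℕ} {t : List Bool} : t ∈ fusionLevels r g (m + 1) ↔
      ∃ u ∈ children (fusionLevels r g m), g m (children (fusionLevels r g m)) u = t :=
  Finset.mem_image

def fusionTree (T : ℕ → Finset (List Bool)) : Set (List Bool) :=
  {s | ∃ m, ∃ t ∈ T m, s <+: t}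

structure IsFusionSeq (c : List Bool → Bool) (i : Bool) (T : ℕ → Finset (List Bool))
    (E : ℕ → Finset ℕ) : Prop where
  nonempty_zero : (T 0).Nonempty
  exists_child : ∀ m, ∀ s ∈ T m, ∀ b, ∃ t ∈ T (m + 1), s ++ [b] <+: t
  exists_parent : ∀ m, ∀ t ∈ T (m + 1), ∃ s ∈ T m, s <+: t
  length_lt : ∀ m, ∀ ℓ ∈ E m, ∀ s ∈ T m, s.length < ℓ
  color : ∀ m, ∀ ℓ ∈ E m, ∀ t ∈ T (m + 1), ℓ < t.length ∧ c (t.take ℓ) = i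

namespace IsFusionSeq

variable {c : List Bool → Bool} {i : Bool} {T : ℕ → Finset (List Bool)} {E : ℕ → Finset ℕ}

lemma exists_extension_of_le (h : IsFusionSeq c i T E) {m m' : ℕ} (hm : m ≤ m') {s : List Bool}
    (hs : s ∈ T m) : ∃ t ∈ T m', s <+: t := by
  induction m', hm using Nat.le_induction with
  | base => exact ⟨s, hs, List.prefix_refl s⟩
  | succ k _ ih =>
    obtain ⟨t, ht, hst⟩ := ih
    obtain ⟨u, hu, htu⟩ := h.exists_child k t ht false
    exact ⟨u, hu, hst.trans ((List.prefix_append t _).trans htu)⟩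

lemma exists_prefix_of_le (h : IsFusionSeq c i T E) {m m' : ℕ} (hm : m ≤ m') {t : List Bool}
    (ht : t ∈ T m') : ∃ s ∈ T m, s <+: t := by
  induction m', hm using Nat.le_induction generalizing t with
  | base => exact ⟨t, ht, List.prefix_refl t⟩
  | succ k _ ih =>
    obtain ⟨u, hu, hut⟩ := h.exists_parent k t ht
    obtain ⟨s, hs, hsu⟩ := ih hu
    exact ⟨s, hs, hsu.trans hut⟩

lemma isPerfectTree (h : IsFusionSeq c i T E) : IsPerfectTree (fusionTree T) := by
  have hsplit : ∀ s ∈ fusionTree T, ∃ t₀ ∈ fusionTree T, ∃ t₁ ∈ fusionTree T,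
      s <+: t₀ ∧ s <+: t₁ ∧ ¬ t₀ <+: t₁ ∧ ¬ t₁ <+: t₀ := by
    rintro s ⟨m, t, ht, hst⟩
    obtain ⟨u₀, hu₀, htu₀⟩ := h.exists_child m t ht false
    obtain ⟨u₁, hu₁, htu₁⟩ := h.exists_child m t ht true
    refine ⟨u₀, ⟨_, u₀, hu₀, List.prefix_refl _⟩, u₁, ⟨_, u₁, hu₁, List.prefix_refl _⟩,
      hst.trans ((List.prefix_append _ _).trans htu₀),
      hst.trans ((List.prefix_append _ _).trans htu₁), fun h₀₁ => ?_, fun h₁₀ => ?_⟩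
    · exact Bool.false_ne_true (List.eq_of_append_singleton_prefix (htu₀.trans h₀₁) htu₁)
    · exact Bool.false_ne_true (List.eq_of_append_singleton_prefix htu₀ (htu₁.trans h₁₀))
  obtain ⟨r, hr⟩ := h.nonempty_zero
  refine ⟨⟨⟨r, 0, r, hr, List.prefix_refl r⟩, ?_, fun s hs => ?_⟩, hsplit⟩
  · rintro s ⟨m, t, ht, hst⟩ u hus
    exact ⟨m, t, ht, hus.trans hst⟩
  · obtain ⟨t₀, ht₀, t₁, -, hs₀, hs₁, h₀₁, -⟩ := hsplit s hs
    exact ⟨t₀, ht₀, hs₀, by rintro rfl; exact h₀₁ hs₁⟩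

lemma color_eq (h : IsFusionSeq c i T E) :
    ∀ s ∈ restrictTree (fusionTree T) (⋃ m, (E m : Set ℕ)), c s = i := by
  rintro s ⟨⟨m', t, ht, hst⟩, hs⟩
  obtain ⟨m, hm⟩ := mem_iUnion.1 hs
  rcases le_or_gt m' m with hle | hlt
  · obtain ⟨u, hu, htu⟩ := h.exists_extension_of_le hle ht
    have := h.length_lt m _ hm u hu
    have := hst.length_le
    have := htu.length_le
    omega
  · obtain ⟨t₀, ht₀, ht₀t⟩ := h.exists_prefix_of_le hlt ht
    obtain ⟨hlen, hcolor⟩ := h.color m _ hm t₀ ht₀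
    rwa [List.prefix_iff_eq_take.1 (List.prefix_of_prefix_length_le hst ht₀t hlen.le)]

end IsFusionSeq

section FusionLevels

variable {r : List Bool} {g : ℕ → Finset (List Bool) → List Bool → List Bool}

lemma prefix_of_mem_fusionLevels (hg : ∀ n S, (∀ s ∈ S, r <+: s) → ∀ s ∈ S, s <+: g n S s)
    (m : ℕ) : ∀ t ∈ fusionLevels r g m, r <+: t := by
  induction m with
  | zero => simp [fusionLevels]
  | succ m ih =>
    intro t ht
    obtain ⟨u, hu, rfl⟩ := mem_fusionLevels_succ.1 ht
    exact (prefix_of_mem_children ih u hu).trans (hg m _ (prefix_of_mem_children ih) u hu)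

lemma isFusionSeq_fusionLevels {c : List Bool → Bool} {i : Bool}
    {e : ℕ → Finset (List Bool) → Finset ℕ}
    (hg : ∀ n S, (∀ s ∈ S, r <+: s) → ∀ s ∈ S, s <+: g n S s ∧
      ∀ ℓ ∈ e n S, s.length < ℓ ∧ ℓ < (g n S s).length ∧ c ((g n S s).take ℓ) = i) :
    IsFusionSeq c i (fusionLevels r g) fun m => e m (children (fusionLevels r g m)) := by
  have hspec m := hg m _ (prefix_of_mem_children
    (prefix_of_mem_fusionLevels (fun n S hS s hs => (hg n S hS s hs).1) m))
  refine ⟨⟨r, by simp [fusionLevels]⟩, fun m s hs b => ?_, fun m t ht => ?_,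
    fun m ℓ hℓ s hs => ?_, fun m ℓ hℓ t ht => ?_⟩
  · have hu : s ++ [b] ∈ children (fusionLevels r g m) := mem_children.2 ⟨s, hs, b, rfl⟩
    exact ⟨_, mem_fusionLevels_succ.2 ⟨_, hu, rfl⟩, (hspec m _ hu).1⟩
  · obtain ⟨u, hu, rfl⟩ := mem_fusionLevels_succ.1 ht
    obtain ⟨s, hs, b, rfl⟩ := mem_children.1 hu
    exact ⟨s, hs, (List.prefix_append _ _).trans (hspec m _ hu).1⟩
  · have hu : s ++ [false] ∈ children (fusionLevels r g m) := mem_children.2 ⟨s, hs, false, rfl⟩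
    have := ((hspec m _ hu).2 ℓ hℓ).1
    simp only [List.length_append, List.length_singleton] at this
    omega
  · obtain ⟨u, hu, rfl⟩ := mem_fusionLevels_succ.1 ht
    exact ((hspec m u hu).2 ℓ hℓ).2

end FusionLevels

lemma exists_isFusionSeq {c : List Bool → Bool} {K : ℕ → Set (Set ℕ)} {i : Bool} {r : List Bool}
    (hG : ∀ S : Finset (List Bool), (∀ s ∈ S, r <+: s) → IsGood c K i S) :
    ∃ T E, IsFusionSeq c i T E ∧ ∀ n, ↑(E n) ∉ K n := by
  -- the hypothesis on `S` sits inside the existential so that `choose` yields total functions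
  have hstep : ∀ (n : ℕ) (S : Finset (List Bool)), ∃ (e : Finset ℕ) (g : List Bool → List Bool),
      (∀ s ∈ S, r <+: s) → ↑e ∉ K n ∧ ∀ s ∈ S, s <+: g s ∧
        ∀ ℓ ∈ e, s.length < ℓ ∧ ℓ < (g s).length ∧ c ((g s).take ℓ) = i := by
    intro n S
    by_cases hS : ∀ s ∈ S, r <+: s
    · obtain ⟨e, he, hext⟩ := hG S hS n
      choose! g hg using hext
      exact ⟨e, g, fun _ => ⟨he, hg⟩⟩
    · exact ⟨∅, id, fun h => absurd h hS⟩
  choose e g hg using hstep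
  refine ⟨_, _, isFusionSeq_fusionLevels fun n S hS => (hg n S hS).2, fun n => (hg n _ ?_).1⟩
  exact prefix_of_mem_children
    (prefix_of_mem_fusionLevels (fun n S hS s hs => ((hg n S hS).2 s hs).1) n)

/-- Every F_σ ideal is an HL ideal. -/
theorem stmt8 (I : Set (Set ℕ)) (hI : IsIdealOn I)
    (hFsigma : ∃ F : ℕ → Set (ℕ → Bool), (∀ n, IsClosed (F n)) ∧
      charFun '' I = ⋃ n, F n) :
    IsHLIdeal I := by
  obtain ⟨F, hF, hIF⟩ := hFsigma
  have hK := fun A => notMem_iff_forall_exists_finset (A := A) hI hF hIF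
  intro c
  obtain ⟨i, r, hG⟩ := exists_isGood hI (fun A => (hK A).1) c
  obtain ⟨T, E, hTE, hE⟩ := exists_isFusionSeq hG
  have hpos : (⋃ m, (E m : Set ℕ)) ∉ I :=
    (hK _).2 fun n => ⟨E n, subset_iUnion (fun m => (E m : Set ℕ)) n, hE n⟩
  exact ⟨fusionTree T, _, ⟨hpos, fun hfin => hpos (hI.1 _ hfin)⟩, hTE.isPerfectTree, i,
    hTE.color_eq⟩
end

section
/- If an ideal I on ω is not an HL ideal, then conv ≤_K I. -/
open Set

/-- The ideal `conv` on `ℚ ∩ [0,1]`: sets with only finitely many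
accumulation points in `ℝ`. -/
def convIdeal : Set (Set ↥(Icc (0 : ℚ) 1)) :=
  {A | {x : ℝ | AccPt x (Filter.principal
    ((fun q : ↥(Icc (0 : ℚ) 1) => ((q : ℚ) : ℝ)) '' A))}.Finite}

/-!
A colouring `c` witnessing that `I` is not HL yields the Katětov map: `n` goes to the point of
the Cantor set whose digits record the colours under `c` of all nodes padded by zeros to length
`n`. If the preimage `X` of some `A ∈ conv` were `I`-positive, then, `A` having finitely many
accumulation points, these points would converge along an `I`-positive `X₀ ⊆ X` up to finitely
many exceptions. So every node `v` has a limit colour `S v`, taken by its pads at all large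
levels in `X₀`. Above some node `r` every node splits in one colour `i` of `S`. Growing two
perfect trees above `r` in alternation, each step beyond the stabilization levels of all nodes
used so far, at every large level one of the trees consists of pads of stabilized nodes of
colour `i`. Thus `X₀` is covered by the monochromatic levels of two perfect trees, which lie in
`I`, and a finite set.
-/

open Filter Topology

namespace IsIdealOn

variable {X : Type*} {I : Set (Set X)}

theorem mem_of_finite (hI : IsIdealOn I) {A : Set X} (hA : A.Finite) : A ∈ I := hI.1 A hA

theorem mono (hI : IsIdealOn I) {A B : Set X} (hAB : A ⊆ B) (hB : B ∈ I) : A ∈ I :=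
  hI.2.2.1 A B hAB hB

theorem union_mem (hI : IsIdealOn I) {A B : Set X} (hA : A ∈ I) (hB : B ∈ I) : A ∪ B ∈ I :=
  hI.2.2.2 A B hA hB

theorem biUnion_mem_s12 (hI : IsIdealOn I) {β : Type*} {T : Set β} (hT : T.Finite)
    {A : β → Set X} (hA : ∀ x ∈ T, A x ∈ I) : ⋃ x ∈ T, A x ∈ I := by
  induction T, hT using Set.Finite.induction_on with
  | empty => simpa using hI.mem_of_finite Set.finite_empty
  | @insert a T _ _ ih =>
    rw [Set.biUnion_insert]
    exact hI.union_mem (hA a (Set.mem_insert a T))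
      (ih fun x hx => hA x (Set.mem_insert_of_mem a hx))

theorem infinite_of_notMem (hI : IsIdealOn I) {A : Set X} (hA : A ∉ I) : A.Infinite :=
  fun hfin => hA (hI.mem_of_finite hfin)

end IsIdealOn

namespace HLIdeal

def pad (v : List Bool) (m : ℕ) : List Bool := v ++ List.replicate m false

@[simp]
theorem length_pad (v : List Bool) (m : ℕ) : (pad v m).length = v.length + m := by
  simp [pad]

@[simp]
theorem pad_zero (v : List Bool) : pad v 0 = v := by simp [pad]

theorem prefix_pad (v : List Bool) (m : ℕ) : v <+: pad v m := List.prefix_append v _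

theorem pad_prefix_pad (v : List Bool) {m m' : ℕ} (h : m ≤ m') : pad v m <+: pad v m' := by
  refine ⟨List.replicate (m' - m) false, ?_⟩
  rw [pad, pad, List.append_assoc, ← List.replicate_add, Nat.add_sub_cancel' h]

theorem eq_pad_of_prefix_pad {s v : List Bool} {m : ℕ} (h : s <+: pad v m)
    (hl : v.length ≤ s.length) : s = pad v (s.length - v.length) := by
  have hsm : s.length ≤ v.length + m := by simpa using h.length_le
  calc s = (pad v m).take s.length := List.prefix_iff_eq_take.1 h
    _ = pad v (s.length - v.length) := by
      rw [pad, List.take_append, List.take_of_length_le hl, List.take_replicate, pad,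
        Nat.min_eq_left (by omega)]

def monoLevels (c : List Bool → Bool) (p : Set (List Bool)) (i : Bool) : Set ℕ :=
  {n | ∀ s ∈ p, s.length = n → c s = i}

theorem exists_coloring_monoLevels_mem {I : Set (Set ℕ)} (hI : IsIdealOn I)
    (h : ¬ IsHLIdeal I) :
    ∃ c : List Bool → Bool, ∀ p, IsPerfectTree p → ∀ i, monoLevels c p i ∈ I := by
  simp only [IsHLIdeal, IsHLFamily, not_forall] at h
  obtain ⟨c, hc⟩ := h
  exact ⟨c, fun p hp i => by_contra fun hA => hc ⟨p, monoLevels c p i,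
    ⟨hA, hI.infinite_of_notMem hA⟩, hp, i, fun s hs => hs.2 s hs.1 rfl⟩⟩

open Cardinal in
theorem continuous_cantorFunction {c : ℝ} (h0 : 0 ≤ c) (h1 : c < 1) :
    Continuous (cantorFunction c) := by
  refine continuous_tsum (u := fun n => c ^ n) (fun n => ?_)
    (summable_geometric_of_lt_one h0 h1) (fun n y => ?_)
  · exact (continuous_of_discreteTopology (f := fun b : Bool => cond b (c ^ n) 0)).comp
      (continuous_apply n)
  · cases hy : y n <;> simp [cantorFunctionAux, hy, abs_of_nonneg h0, pow_nonneg h0]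

open Cardinal in
theorem cantorFunction_eq_sum {c : ℝ} {y : ℕ → Bool} (s : Finset ℕ)
    (hs : ∀ j, y j = true ↔ j ∈ s) : cantorFunction c y = ∑ j ∈ s, c ^ j := by
  rw [cantorFunction, tsum_eq_sum (s := s) fun j hj =>
    cantorFunctionAux_false (Bool.eq_false_iff.2 fun h => hj ((hs j).1 h))]
  exact Finset.sum_congr rfl fun j hj => cantorFunctionAux_true ((hs j).2 hj)

/-- The point of the middle-thirds Cantor set with ternary digits `2 y₀ 2 y₁ …`. -/
noncomputable def ternary (y : ℕ → Bool) : ℝ := 2 / 3 * Cardinal.cantorFunction (1 / 3) y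

theorem ternary_mem_Icc (y : ℕ → Bool) : ternary y ∈ Icc (0 : ℝ) 1 := by
  have hle := Cardinal.cantorFunction_le (c := 1 / 3) (g := fun _ => true) (by norm_num)
    (by norm_num) (fun n _ => rfl) (f := y)
  have hall : Cardinal.cantorFunction (1 / 3) (fun _ => true) = 3 / 2 := by
    simp only [Cardinal.cantorFunction, Cardinal.cantorFunctionAux, cond_true]
    rw [tsum_geometric_of_lt_one (by norm_num) (by norm_num)]
    norm_num
  have hnonneg : 0 ≤ Cardinal.cantorFunction (1 / 3) y :=
    tsum_nonneg fun n => Cardinal.cantorFunctionAux_nonneg (by norm_num)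
  constructor <;> rw [ternary] <;> linarith

theorem isClosedEmbedding_ternary : IsClosedEmbedding ternary := by
  refine (continuous_const.mul (continuous_cantorFunction (by norm_num) (by norm_num)))
    |>.isClosedEmbedding fun y z h =>
      Cardinal.cantorFunction_injective (c := 1 / 3) (by norm_num) (by norm_num) ?_
  simpa [ternary] using h

theorem exists_eventually_eq_of_tendsto_ternary {β : Type*} {l : Filter β} [l.NeBot]
    {g : β → ℕ → Bool} {ξ : ℝ} (h : Tendsto (ternary ∘ g) l (𝓝 ξ)) :
    ∃ z : ℕ → Bool, ∀ j, ∀ᶠ n in l, g n j = z j := by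
  obtain ⟨z, rfl⟩ : ξ ∈ Set.range ternary :=
    isClosedEmbedding_ternary.isClosed_range.closure_subset
      (mem_closure_of_tendsto h (Eventually.of_forall fun n => Set.mem_range_self _))
  have hz := tendsto_pi_nhds.1 (isClosedEmbedding_ternary.tendsto_nhds_iff.2 h)
  exact ⟨z, fun j => tendsto_pure.1 (by simpa only [nhds_discrete] using hz j)⟩

section Coding

variable (c : List Bool → Bool)

/-- The coordinates `inl k` only serve to make `code c` injective. -/
def codeAt (n : ℕ) : ℕ ⊕ List Bool → Bool
  | .inl k => decide (k = n)
  | .inr v => decide (v.length ≤ n) && c (pad v (n - v.length))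

def code (n : ℕ) (j : ℕ) : Bool :=
  (Encodable.decode₂ (ℕ ⊕ List Bool) j).elim false (codeAt c n)

theorem code_encode (n : ℕ) (a : ℕ ⊕ List Bool) :
    code c n (Encodable.encode a) = codeAt c n a := by
  simp [code]

theorem code_injective : Function.Injective (code c) := fun n m h => by
  have h := congrFun h (Encodable.encode (Sum.inl n : ℕ ⊕ List Bool))
  rw [code_encode, code_encode] at h
  simpa [codeAt, eq_comm] using h

theorem finite_code_eq_true (n : ℕ) : {j | code c n j = true}.Finite := by
  refine (((List.finite_length_le Bool n).image Sum.inr).insert (Sum.inl n)).image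
    Encodable.encode |>.subset fun j hj => ?_
  cases hd : Encodable.decode₂ (ℕ ⊕ List Bool) j with
  | none => simp [code, hd] at hj
  | some a =>
    refine ⟨a, ?_, Encodable.mem_decode₂.1 hd⟩
    cases a <;> simp_all [code, codeAt]

noncomputable def codeValue (n : ℕ) : ℚ :=
  2 / 3 * ∑ j ∈ (finite_code_eq_true c n).toFinset, (1 / 3 : ℚ) ^ j

theorem cast_codeValue (n : ℕ) : (codeValue c n : ℝ) = ternary (code c n) := by
  rw [ternary, cantorFunction_eq_sum (finite_code_eq_true c n).toFinset fun j => by simp,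
    codeValue]
  push_cast
  rfl

noncomputable def katetovMap (n : ℕ) : Icc (0 : ℚ) 1 :=
  ⟨codeValue c n, by
    have h := ternary_mem_Icc (code c n)
    rw [← cast_codeValue] at h
    exact ⟨by exact_mod_cast h.1, by exact_mod_cast h.2⟩⟩

end Coding

section Accumulation

variable {β α : Type*} [TopologicalSpace α] {g : β → α} {X : Set β}

theorem finite_sep_of_forall_not_accPt (hg : Function.Injective g) {C : Set α}
    (hC : IsCompact C) (hCX : ∀ x ∈ C, ¬ AccPt x (𝓟 (g '' X))) :
    {n ∈ X | g n ∈ C}.Finite := by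
  by_contra hinf
  obtain ⟨x, hxC, hx⟩ := ((Set.Infinite.image hg.injOn hinf).exists_accPt_of_subset_isCompact
    hC (Set.image_subset_iff.2 fun n hn => hn.2))
  exact hCX x hxC (hx.mono (principal_mono.2 (Set.image_mono (Set.sep_subset _ _))))

theorem exists_isClosed_mem_nhds_forall_eq [T3Space α] {T : Set α} (hT : T.Finite) (x : α) :
    ∃ U ∈ 𝓝 x, IsClosed U ∧ ∀ y ∈ T, y ∈ U → y = x := by
  have hx : (T \ {x})ᶜ ∈ 𝓝 x :=
    (hT.subset Set.sdiff_subset).isClosed.isOpen_compl.mem_nhds (by simp)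
  obtain ⟨U, ⟨hUx, hUc⟩, hUT⟩ := (closed_nhds_basis x).mem_iff.1 hx
  exact ⟨U, hUx, hUc, fun y hy hyU => by_contra fun hne => hUT hyU ⟨hy, hne⟩⟩

theorem exists_notMem_tendsto [T3Space α] {I : Set (Set β)} (hI : IsIdealOn I)
    (hg : Function.Injective g) {K : Set α} (hK : IsCompact K) (hXK : ∀ n ∈ X, g n ∈ K)
    (hX : X ∉ I) (hT : {x | AccPt x (𝓟 (g '' X))}.Finite) :
    ∃ X₀ ⊆ X, X₀ ∉ I ∧ ∃ ξ, Tendsto g (cofinite ⊓ 𝓟 X₀) (𝓝 ξ) := by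
  set T := {x | AccPt x (𝓟 (g '' X))}
  choose U hUx hUc hUT using exists_isClosed_mem_nhds_forall_eq hT
  have hfin : ∀ C, IsCompact C → (∀ y ∈ T, y ∉ C) → {n ∈ X | g n ∈ C}.Finite :=
    fun C hC hCT => finite_sep_of_forall_not_accPt hg hC fun y hyC hy => hCT y hy hyC
  -- Off the isolating neighbourhoods of the finitely many accumulation points, `X` is finite.
  obtain ⟨ξ, hξ⟩ : ∃ ξ, {n ∈ X | g n ∈ U ξ} ∉ I := by
    by_contra! hall
    let C := K \ ⋃ x ∈ T, interior (U x)
    have hC : {n ∈ X | g n ∈ C}.Finite := by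
      refine hfin C (hK.diff (isOpen_biUnion fun _ _ => isOpen_interior)) fun y hy hyC => ?_
      exact hyC.2 (Set.mem_biUnion hy (mem_interior_iff_mem_nhds.2 (hUx y)))
    refine hX (hI.mono (fun n hn => ?_)
      (hI.union_mem (hI.mem_of_finite hC) (hI.biUnion_mem_s12 hT fun x _ => hall x)))
    by_cases hnU : g n ∈ ⋃ x ∈ T, interior (U x)
    · obtain ⟨x, hxT, hx⟩ := Set.mem_iUnion₂.1 hnU
      exact Or.inr (Set.mem_biUnion hxT ⟨hn, interior_subset hx⟩)
    · exact Or.inl ⟨hn, hXK n hn, hnU⟩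
  refine ⟨{n ∈ X | g n ∈ U ξ}, Set.sep_subset _ _, hξ, ξ,
    tendsto_iff_forall_eventually_mem.2 fun V hV => ?_⟩
  rw [eventually_inf_principal, eventually_cofinite]
  let C := (K ∩ U ξ) \ interior V
  have hC : {n ∈ X | g n ∈ C}.Finite := by
    refine hfin C ((hK.inter_right (hUc ξ)).diff isOpen_interior) fun y hy hyC => ?_
    rw [hUT ξ y hy hyC.1.2] at hyC
    exact hyC.2 (mem_interior_iff_mem_nhds.2 hV)
  refine hC.subset fun n hn => ?_
  obtain ⟨⟨hnX, hnU⟩, hnV⟩ := Classical.not_imp.1 hn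
  exact ⟨hnX, ⟨hXK n hnX, hnU⟩, fun h => hnV (interior_subset h)⟩

end Accumulation

theorem isPerfectTree_of_split {p : Set (List Bool)} (hne : p.Nonempty)
    (hpre : ∀ s ∈ p, ∀ t, t <+: s → t ∈ p)
    (hsplit : ∀ s ∈ p, ∃ t₀ ∈ p, ∃ t₁ ∈ p, s <+: t₀ ∧ s <+: t₁ ∧ ¬ t₀ <+: t₁ ∧ ¬ t₁ <+: t₀) :
    IsPerfectTree p := by
  refine ⟨⟨hne, hpre, fun s hs => ?_⟩, hsplit⟩
  obtain ⟨t₀, h₀, t₁, -, hs₀, hs₁, h₀₁, -⟩ := hsplit s hs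
  exact ⟨t₀, h₀, hs₀, fun h => h₀₁ (h ▸ hs₁)⟩

theorem not_prefix_of_append_singleton {u x y : List Bool} {a b : Bool}
    (hx : u ++ [a] <+: x) (hy : u ++ [b] <+: y) (hab : a ≠ b) : ¬ x <+: y := fun hxy => by
  have h := List.prefix_of_prefix_length_le (hx.trans hxy) hy (by simp)
  exact hab (by simpa using h.eq_of_length (by simp))

def IsSplit (S : List Bool → Bool) (i : Bool) (u : List Bool) (p : List Bool × List Bool) :
    Prop :=
  u <+: p.1 ∧ u <+: p.2 ∧ ¬ p.1 <+: p.2 ∧ ¬ p.2 <+: p.1 ∧ S p.1 = i ∧ S p.2 = i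

/-- Either every node splits in colour `false`, or some node fails to, and then one of its two
immediate cones is entirely of colour `true`. -/
theorem exists_root_split (S : List Bool → Bool) :
    ∃ (r : List Bool) (i : Bool) (σ : List Bool → List Bool × List Bool),
      S r = i ∧ ∀ u, r <+: u → IsSplit S i u (σ u) := by
  by_cases hfalse : ∀ u, ∃ p, IsSplit S false u p
  · choose σ hσ using hfalse
    exact ⟨(σ []).1, false, σ, (hσ []).2.2.2.2.1, fun u _ => hσ u⟩
  push Not at hfalse
  obtain ⟨u₀, hu₀⟩ := hfalse
  obtain ⟨a, ha⟩ : ∃ a, ∀ x, u₀ ++ [a] <+: x → S x = true := by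
    by_contra! hcon
    obtain ⟨x, hx, hSx⟩ := hcon false
    obtain ⟨y, hy, hSy⟩ := hcon true
    exact hu₀ (x, y) ⟨(List.prefix_append _ _).trans hx, (List.prefix_append _ _).trans hy,
      not_prefix_of_append_singleton hx hy (by decide),
      not_prefix_of_append_singleton hy hx (by decide), by simpa using hSx, by simpa using hSy⟩
  refine ⟨u₀ ++ [a], true, fun u => (u ++ [false], u ++ [true]), ha _ List.prefix_rfl,
    fun u hu => ⟨List.prefix_append _ _, List.prefix_append _ _, ?_, ?_, ?_, ?_⟩⟩
  · exact not_prefix_of_append_singleton List.prefix_rfl List.prefix_rfl (by decide)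
  · exact not_prefix_of_append_singleton List.prefix_rfl List.prefix_rfl (by decide)
  · exact ha _ (hu.trans (List.prefix_append _ _))
  · exact ha _ (hu.trans (List.prefix_append _ _))

section Construction

variable (σ : List Bool → List Bool × List Bool) (N : List Bool → ℕ) (r : List Bool)

def spawn (G : ℕ) (B : Finset (List Bool)) : Finset (List Bool) :=
  B ∪ B.biUnion fun b => {(σ (pad b (G + 1 - b.length))).1, (σ (pad b (G + 1 - b.length))).2}

/-- Stage `j` consists of the finite sets of bases of the two trees and the level
`threshold j`, which exceeds `N b + b.length` for all bases `b` so far. Step `j` grows only the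
tree `j.bodd`, by splitting its bases padded to length `threshold j + 1`; so between the levels
`threshold j` and `threshold (j + 1)` the other tree consists of pads of bases of stage `j`. -/
def stage : ℕ → (Bool → Finset (List Bool)) × ℕ
  | 0 => (fun _ => {r}, N r + r.length + 1)
  | j + 1 =>
    let B e := if e = j.bodd then spawn σ (stage j).2 ((stage j).1 e) else (stage j).1 e
    (B, ((B true ∪ B false).sup fun b => N b + b.length) + (stage j).2 + 1)

def bases (j : ℕ) (e : Bool) : Finset (List Bool) := (stage σ N r j).1 e

def threshold (j : ℕ) : ℕ := (stage σ N r j).2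

def tree (e : Bool) : Set (List Bool) := {s | ∃ j, ∃ b ∈ bases σ N r j e, ∃ m, s <+: pad b m}

theorem bases_zero (e : Bool) : bases σ N r 0 e = {r} := rfl

theorem bases_succ (j : ℕ) (e : Bool) :
    bases σ N r (j + 1) e =
      if e = j.bodd then spawn σ (threshold σ N r j) (bases σ N r j e) else bases σ N r j e :=
  rfl

theorem bases_mono (e : Bool) : Monotone fun j => bases σ N r j e := by
  refine monotone_nat_of_le_succ fun j => ?_
  simp only [bases_succ]
  split_ifs
  exacts [Finset.subset_union_left, le_rfl]

theorem weight_lt_threshold {j : ℕ} {e : Bool} {b : List Bool} (hb : b ∈ bases σ N r j e) :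
    N b + b.length < threshold σ N r j := by
  cases j with
  | zero =>
    rw [bases_zero, Finset.mem_singleton] at hb
    subst hb
    exact Nat.lt_succ_self _
  | succ j =>
    have h := Finset.le_sup (f := fun b => N b + b.length)
      (show b ∈ bases σ N r (j + 1) true ∪ bases σ N r (j + 1) false by cases e <;> simp [hb])
    exact Nat.lt_succ_of_le (le_add_right h)

theorem threshold_strictMono : StrictMono (threshold σ N r) :=
  strictMono_nat_of_lt_succ fun _ => Nat.lt_succ_of_le (Nat.le_add_left _ _)

theorem split_mem_bases {j : ℕ} {b : List Bool} (hb : b ∈ bases σ N r j j.bodd) :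
    (σ (pad b (threshold σ N r j + 1 - b.length))).1 ∈ bases σ N r (j + 1) j.bodd ∧
      (σ (pad b (threshold σ N r j + 1 - b.length))).2 ∈ bases σ N r (j + 1) j.bodd := by
  rw [bases_succ, if_pos rfl]
  exact ⟨Finset.mem_union_right _ (Finset.mem_biUnion.2 ⟨b, hb, by simp⟩),
    Finset.mem_union_right _ (Finset.mem_biUnion.2 ⟨b, hb, by simp⟩)⟩

theorem mem_bases_succ {j : ℕ} {e : Bool} {b : List Bool} (hb : b ∈ bases σ N r (j + 1) e) :
    b ∈ bases σ N r j e ∨ e = j.bodd ∧ ∃ b' ∈ bases σ N r j e,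
      b = (σ (pad b' (threshold σ N r j + 1 - b'.length))).1 ∨
        b = (σ (pad b' (threshold σ N r j + 1 - b'.length))).2 := by
  rw [bases_succ] at hb
  split_ifs at hb with he
  · simpa [spawn, he] using hb
  · exact Or.inl hb

variable {σ N r} {S : List Bool → Bool} {i : Bool} (hσ : ∀ u, r <+: u → IsSplit S i u (σ u))
include hσ

theorem prefix_and_colour_of_mem_bases (hr : S r = i) {j : ℕ} {e : Bool} {b : List Bool}
    (hb : b ∈ bases σ N r j e) : r <+: b ∧ S b = i := by
  induction j generalizing b with
  | zero =>
    rw [bases_zero, Finset.mem_singleton] at hb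
    subst hb
    exact ⟨List.prefix_rfl, hr⟩
  | succ j ih =>
    rcases mem_bases_succ σ N r hb with hb | ⟨-, b', hb', hb⟩
    · exact ih hb
    · have hru := (ih hb').1.trans (prefix_pad b' (threshold σ N r j + 1 - b'.length))
      have hu := hσ _ hru
      rcases hb with rfl | rfl
      exacts [⟨hru.trans hu.1, hu.2.2.2.2.1⟩, ⟨hru.trans hu.2.1, hu.2.2.2.2.2⟩]

theorem mem_bases_or_pad_prefix (hr : S r = i) {j : ℕ} {e : Bool} {b : List Bool}
    (hb : b ∈ bases σ N r (j + 1) e) :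
    b ∈ bases σ N r j e ∨
      e = j.bodd ∧ ∃ b' ∈ bases σ N r j e, pad b' (threshold σ N r j + 1 - b'.length) <+: b := by
  rcases mem_bases_succ σ N r hb with hb | ⟨he, b', hb', hb⟩
  · exact Or.inl hb
  · have hu := hσ _ ((prefix_and_colour_of_mem_bases hσ hr hb').1.trans
      (prefix_pad b' (threshold σ N r j + 1 - b'.length)))
    refine Or.inr ⟨he, b', hb', ?_⟩
    rcases hb with rfl | rfl
    exacts [hu.1, hu.2.1]

theorem isPerfectTree_tree (hr : S r = i) (e : Bool) : IsPerfectTree (tree σ N r e) := by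
  refine isPerfectTree_of_split ⟨r, 0, r, by simp [bases_zero], 0, by simp⟩ ?_ ?_
  · rintro s ⟨j, b, hb, m, hsb⟩ t hts
    exact ⟨j, b, hb, m, hts.trans hsb⟩
  rintro s ⟨j, b, hb, m, hsb⟩
  obtain ⟨J, hJe, hJ⟩ : ∃ J, J.bodd = e ∧ j + b.length + m ≤ J :=
    ⟨Nat.bit e (j + b.length + m), Nat.bodd_bit _ _, by rw [Nat.bit_val]; omega⟩
  have hGJ : J ≤ threshold σ N r J := (threshold_strictMono σ N r).le_apply
  subst hJe
  have hbJ : b ∈ bases σ N r J J.bodd := bases_mono σ N r _ (by omega) hb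
  obtain ⟨h₀, h₁⟩ := split_mem_bases σ N r hbJ
  set u := pad b (threshold σ N r J + 1 - b.length)
  have hsu : s <+: u := hsb.trans (pad_prefix_pad b (by omega))
  have hu := hσ u ((prefix_and_colour_of_mem_bases hσ hr hbJ).1.trans (prefix_pad _ _))
  exact ⟨_, ⟨J + 1, _, h₀, 0, by simp⟩, _, ⟨J + 1, _, h₁, 0, by simp⟩, hsu.trans hu.1,
    hsu.trans hu.2.1, hu.2.2.1, hu.2.2.2.1⟩

theorem exists_base_of_mem_tree (hr : S r = i) {j : ℕ} {e : Bool} (he : e ≠ j.bodd)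
    {s : List Bool} (hs : s ∈ tree σ N r e) (hsl : s.length < threshold σ N r (j + 1)) :
    ∃ b ∈ bases σ N r j e, ∃ m, s <+: pad b m := by
  obtain ⟨j', b, hb, m, hsb⟩ := hs
  induction j' generalizing b m with
  | zero => exact ⟨b, bases_mono σ N r e (Nat.zero_le j) hb, m, hsb⟩
  | succ k ih =>
    rcases le_or_gt (k + 1) j with hkj | hjk
    · exact ⟨b, bases_mono σ N r e hkj hb, m, hsb⟩
    rcases mem_bases_or_pad_prefix hσ hr hb with hb | ⟨rfl, b', hb', hpad⟩
    · exact ih b hb m hsb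
    have hkj : k ≠ j := fun h => he (h ▸ rfl)
    have hG := (threshold_strictMono σ N r).monotone (show j + 1 ≤ k by omega)
    have hwt := weight_lt_threshold σ N r hb'
    refine ih b' hb' _ (List.prefix_of_prefix_length_le hsb (hpad.trans (prefix_pad b m)) ?_)
    simp only [length_pad]
    omega

theorem mem_monoLevels_tree (hr : S r = i) {c : List Bool → Bool} {n j : ℕ}
    (hjn : threshold σ N r j ≤ n) (hnj : n < threshold σ N r (j + 1))
    (hc : ∀ v, N v ≤ n → c (pad v (n - v.length)) = S v) :
    n ∈ monoLevels c (tree σ N r (!j.bodd)) i := by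
  rintro s hs rfl
  obtain ⟨b, hb, m, hsb⟩ := exists_base_of_mem_tree hσ hr (by simp) hs hnj
  have hwt := weight_lt_threshold σ N r hb
  rw [eq_pad_of_prefix_pad hsb (by omega), hc b (by omega)]
  exact (prefix_and_colour_of_mem_bases hσ hr hb).2

end Construction

theorem exists_perfectTrees_monoLevels (S : List Bool → Bool) (N : List Bool → ℕ) :
    ∃ (T : Bool → Set (List Bool)) (i : Bool) (G : ℕ), (∀ e, IsPerfectTree (T e)) ∧
      ∀ (c : List Bool → Bool) (n : ℕ), G ≤ n →
        (∀ v, N v ≤ n → c (pad v (n - v.length)) = S v) → ∃ e, n ∈ monoLevels c (T e) i := by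
  obtain ⟨r, i, σ, hr, hσ⟩ := exists_root_split S
  refine ⟨tree σ N r, i, threshold σ N r 0, isPerfectTree_tree hσ hr, fun c n hn hc => ?_⟩
  obtain ⟨j, hjn, hnj⟩ := (threshold_strictMono σ N r).exists_between_of_tendsto_atTop
    (threshold_strictMono σ N r).tendsto_atTop (x := n + 1) (by omega)
  exact ⟨!j.bodd, mem_monoLevels_tree hσ hr (by omega) (by omega) hc⟩

theorem exists_colour_limit (c : List Bool → Bool) {X₀ : Set ℕ} (hX₀ : X₀.Infinite) {ξ : ℝ}
    (h : Tendsto (fun n => ternary (code c n)) (cofinite ⊓ 𝓟 X₀) (𝓝 ξ)) :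
    ∃ S : List Bool → Bool, ∀ v, ∃ N, ∀ n ∈ X₀, N ≤ n → c (pad v (n - v.length)) = S v := by
  have := hX₀.cofinite_inf_principal_neBot
  obtain ⟨z, hz⟩ := exists_eventually_eq_of_tendsto_ternary (g := code c) h
  refine ⟨fun v => z (Encodable.encode (Sum.inr v : ℕ ⊕ List Bool)), fun v => ?_⟩
  obtain ⟨N, hN⟩ := eventually_atTop.1 <| Nat.cofinite_eq_atTop ▸ eventually_inf_principal.1
    (hz (Encodable.encode (Sum.inr v : ℕ ⊕ List Bool)))
  refine ⟨max N v.length, fun n hn hNn => ?_⟩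
  have h := hN n (le_of_max_le_left hNn) hn
  rw [code_encode] at h
  simpa [codeAt, le_of_max_le_right hNn] using h

end HLIdeal

open HLIdeal

/-- If an ideal `I` on `ω` is not HL, then `conv ≤_K I`. -/
theorem stmt12 (I : Set (Set ℕ)) (hI : IsIdealOn I) (h : ¬ IsHLIdeal I) :
    KatetovLE convIdeal I := by
  obtain ⟨c, hc⟩ := exists_coloring_monoLevels_mem hI h
  refine ⟨katetovMap c, fun A hA => by_contra fun hX => ?_⟩
  obtain ⟨X₀, -, hX₀, ξ, hξ⟩ := exists_notMem_tendsto hI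
    (isClosedEmbedding_ternary.injective.comp (code_injective c)) isCompact_Icc
    (fun n _ => ternary_mem_Icc _) hX <| hA.subset fun x hx => hx.mono <| principal_mono.2 <| by
      rintro _ ⟨n, hn, rfl⟩
      exact ⟨katetovMap c n, hn, cast_codeValue c n⟩
  obtain ⟨S, hS⟩ := exists_colour_limit c (hI.infinite_of_notMem hX₀) hξ
  choose N hN using hS
  obtain ⟨T, i, G, hT, hlev⟩ := exists_perfectTrees_monoLevels S N
  refine hX₀ (hI.mono (fun n hn => ?_) (hI.union_mem (hI.union_mem (hc _ (hT true) i)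
    (hc _ (hT false) i)) (hI.mem_of_finite (Set.finite_Iio G))))
  rcases lt_or_ge n G with hnG | hGn
  · exact Or.inr hnG
  · obtain ⟨e, he⟩ := hlev c n hGn fun v hv => hN v n hn hv
    cases e
    exacts [Or.inl (Or.inr he), Or.inl (Or.inl he)]
end

section
/- There exist a perfect tree p ⊆ 2^{<ω} and a coloring c : p → 2 such that for every perfect tree q ⊆ p the set H_c(q) = {n ∈ ω : c is constant on q ∩ 2^n} has asymptotic density zero. Consequently, the density zero ideal Z is not an HL ideal. -/
open Set

/-!
Colour a node `s` of length `n` by the parity of the sum of the bits `s j` over the positions `j`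
at which the binary expansion of `n` has a digit `1`. For `n ∈ [2^K, 2^(K+1))` and `N = K + 1`
this colour is the value of a linear functional `bits n` on `𝔽₂^N` at the first `N` bits of `s`,
and `n ↦ bits n` is injective on the block. If the colour is constant on the nodes of
length `n` of a tree `q`, then `bits n` is constant on the set `S ⊆ 𝔽₂^N` of nodes of length `N`
of `q`, so it annihilates the span `W` of `S - S`. Hence the block contains at most
`|W^⊥| = 2^N / |W| ≤ 2^N / |S|` monochromatic levels. For a perfect tree `|S| → ∞`, so the
monochromatic levels fill a vanishing fraction of each dyadic block and have density zero.
Taking `p = 2^{<ω}`, a set `A` such that some perfect `q` is monochromatic on `q↾A` lies in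
`H_c(q)`, hence in `Z`.
-/

open Filter

def treeLevel (q : Set (List Bool)) (n : ℕ) : Set (List Bool) :=
  {s ∈ q | s.length = n}

lemma treeLevel_finite (q : Set (List Bool)) (n : ℕ) : (treeLevel q n).Finite :=
  (List.finite_length_eq Bool n).subset fun _ hs => hs.2

namespace IsTree

variable {q : Set (List Bool)}

lemma take_mem (hq : IsTree q) {s : List Bool} (hs : s ∈ q) (n : ℕ) : s.take n ∈ q :=
  hq.2.1 s hs _ (List.take_prefix n s)

lemma nil_mem (hq : IsTree q) : [] ∈ q := by
  obtain ⟨s, hs⟩ := hq.1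
  simpa using hq.take_mem hs 0

lemma exists_extension (hq : IsTree q) {s : List Bool} (hs : s ∈ q) {n : ℕ}
    (hn : s.length ≤ n) : ∃ t ∈ q, s <+: t ∧ t.length = n := by
  induction n, hn using Nat.le_induction with
  | base => exact ⟨s, hs, List.prefix_rfl, rfl⟩
  | succ n _ ih =>
    obtain ⟨t, ht, hst, rfl⟩ := ih
    obtain ⟨u, hu, htu, hne⟩ := hq.2.2 t ht
    have hlt : t.length < u.length :=
      lt_of_le_of_ne htu.length_le fun h => hne (htu.eq_of_length h)
    refine ⟨u.take (t.length + 1), hq.take_mem hu _,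
      hst.trans (List.prefix_take_iff.mpr ⟨htu, by omega⟩), ?_⟩
    simp only [List.length_take]
    omega

lemma image_take_treeLevel (hq : IsTree q) {n L : ℕ} (h : n ≤ L) :
    (·.take n) '' treeLevel q L = treeLevel q n := by
  ext s
  constructor
  · rintro ⟨t, ⟨ht, rfl⟩, rfl⟩
    exact ⟨hq.take_mem ht n, by simp [h]⟩
  · rintro ⟨hs, rfl⟩
    obtain ⟨t, ht, hst, htL⟩ := hq.exists_extension hs h
    exact ⟨t, ⟨ht, htL⟩, (List.prefix_iff_eq_take.mp hst).symm⟩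

lemma monotone_ncard_treeLevel (hq : IsTree q) : Monotone fun n => (treeLevel q n).ncard := by
  intro n L h
  show (treeLevel q n).ncard ≤ (treeLevel q L).ncard
  rw [← hq.image_take_treeLevel h]
  exact ncard_image_le (treeLevel_finite q L)

end IsTree

namespace IsPerfectTree

variable {q : Set (List Bool)}

lemma exists_ncard_treeLevel_lt (hq : IsPerfectTree q) (n : ℕ) :
    ∃ L, (treeLevel q n).ncard < (treeLevel q L).ncard := by
  obtain ⟨s, hs, -, rfl⟩ := hq.1.exists_extension hq.1.nil_mem (Nat.zero_le n)
  obtain ⟨t₀, ht₀, t₁, ht₁, hst₀, hst₁, h₀₁, h₁₀⟩ := hq.2 s hs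
  set L := max t₀.length t₁.length
  obtain ⟨u₀, hu₀, htu₀, hu₀L⟩ := hq.1.exists_extension ht₀ (le_max_left _ _)
  obtain ⟨u₁, hu₁, htu₁, hu₁L⟩ := hq.1.exists_extension ht₁ (le_max_right _ _)
  have hsL : s.length ≤ L := hst₀.length_le.trans (le_max_left _ _)
  refine ⟨L, lt_of_le_of_ne (hq.1.monotone_ncard_treeLevel hsL) fun heq => ?_⟩
  rw [← hq.1.image_take_treeLevel hsL] at heq
  have hu : u₀ = u₁ := injOn_of_ncard_image_eq heq (treeLevel_finite q L) ⟨hu₀, hu₀L⟩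
    ⟨hu₁, hu₁L⟩ (by
      show u₀.take s.length = u₁.take s.length
      rw [← List.prefix_iff_eq_take.mp (hst₀.trans htu₀),
        ← List.prefix_iff_eq_take.mp (hst₁.trans htu₁)])
  rcases List.prefix_or_prefix_of_prefix htu₀ (hu ▸ htu₁) with h | h
  exacts [h₀₁ h, h₁₀ h]

lemma tendsto_ncard_treeLevel (hq : IsPerfectTree q) :
    Tendsto (fun n => (treeLevel q n).ncard) atTop atTop := by
  refine tendsto_atTop_atTop_of_monotone hq.1.monotone_ncard_treeLevel fun b => ?_
  induction b with
  | zero => exact ⟨0, Nat.zero_le _⟩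
  | succ b ih =>
    obtain ⟨n, hn⟩ := ih
    obtain ⟨L, hL⟩ := hq.exists_ncard_treeLevel_lt n
    exact ⟨L, hn.trans_lt hL⟩

end IsPerfectTree

lemma isPerfectTree_univ : IsPerfectTree (univ : Set (List Bool)) := by
  have not_prefix : ∀ (s : List Bool) (a b : Bool), a ≠ b → ¬ s ++ [a] <+: s ++ [b] :=
    fun s a b hab h => hab (by simpa using h.eq_of_length (by simp))
  refine ⟨⟨⟨[], trivial⟩, fun _ _ _ _ => trivial, fun s _ => ⟨s ++ [true], trivial,
    List.prefix_append _ _, fun h => by simpa using congrArg List.length h⟩⟩, fun s _ => ?_⟩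
  exact ⟨s ++ [false], trivial, s ++ [true], trivial, List.prefix_append _ _,
    List.prefix_append _ _, not_prefix s _ _ (by decide), not_prefix s _ _ (by decide)⟩

theorem Module.Dual.ncard_mul_ncard_le {K V : Type*} [Field K] [Finite K] [AddCommGroup V]
    [Module K V] [FiniteDimensional K V] {S : Set V} {T : Set (Module.Dual K V)}
    (hT : ∀ φ ∈ T, ∀ x ∈ S, ∀ y ∈ S, φ x = φ y) : S.ncard * T.ncard ≤ Nat.card V := by
  rcases S.eq_empty_or_nonempty with rfl | ⟨s₀, hs₀⟩
  · simp
  have : Finite V := Module.finite_of_finite K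
  have : Finite (Module.Dual K V) := Module.finite_of_finite K
  set W := Submodule.span K ((· - s₀) '' S)
  have hTW : T ⊆ W.dualAnnihilator := fun φ hφ => by
    have hker : W ≤ LinearMap.ker φ := Submodule.span_le.mpr <| by
      rintro _ ⟨x, hx, rfl⟩
      simp [hT φ hφ x hx s₀ hs₀]
    exact (Submodule.mem_dualAnnihilator φ).mpr fun w hw => hker hw
  have hSW : S.ncard ≤ (W : Set V).ncard :=
    ncard_le_ncard_of_injOn (· - s₀) (fun x hx => Submodule.subset_span ⟨x, hx, rfl⟩)
      sub_left_injective.injOn (toFinite _)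
  calc S.ncard * T.ncard ≤ Nat.card W * Nat.card W.dualAnnihilator := by
        rw [← Nat.card_coe_set_eq] at hSW
        exact Nat.mul_le_mul hSW ((ncard_le_ncard hTW (toFinite _)).trans_eq
          (Nat.card_coe_set_eq _).symm)
    _ = Nat.card V := by
        rw [Module.natCard_eq_pow_finrank (K := K) (V := W),
          Module.natCard_eq_pow_finrank (K := K) (V := W.dualAnnihilator),
          ← pow_add, Subspace.finrank_add_finrank_dualAnnihilator_eq,
          ← Module.natCard_eq_pow_finrank]

theorem ncard_mul_ncard_le_of_dotProduct_eq {K ι : Type*} [Field K] [Finite K] [Fintype ι]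
    {S T : Set (ι → K)} (hT : ∀ v ∈ T, ∀ x ∈ S, ∀ y ∈ S, v ⬝ᵥ x = v ⬝ᵥ y) :
    S.ncard * T.ncard ≤ Nat.card (ι → K) := by
  classical
  have h := Module.Dual.ncard_mul_ncard_le (S := S) (T := dotProductEquiv K ι '' T) <| by
    rintro _ ⟨v, hv, rfl⟩
    exact hT v hv
  rwa [ncard_image_of_injective _ (dotProductEquiv K ι).injective] at h

def boolVec (N : ℕ) (b : ℕ → Bool) : Fin N → ZMod 2 := fun j => (b j).toNat

lemma boolVec_eq_boolVec_iff {N : ℕ} {b b' : ℕ → Bool} :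
    boolVec N b = boolVec N b' ↔ ∀ j < N, b j = b' j := by
  constructor
  · intro h j hj
    have hj := congrFun h ⟨j, hj⟩
    revert hj
    simp only [boolVec]
    cases b j <;> cases b' j <;> decide
  · intro h
    funext j
    simp [boolVec, h j j.2]

lemma dotProduct_boolVec_of_le {N n : ℕ} (hNn : N ≤ n) {b b' : ℕ → Bool}
    (hb : ∀ j, N ≤ j → b j = false) :
    boolVec n b ⬝ᵥ boolVec n b' = boolVec N b ⬝ᵥ boolVec N b' := by
  simp only [dotProduct, boolVec]
  rw [Fin.sum_univ_eq_sum_range (fun j => ((b j).toNat : ZMod 2) * (b' j).toNat) n,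
    Fin.sum_univ_eq_sum_range (fun j => ((b j).toNat : ZMod 2) * (b' j).toNat) N]
  refine (Finset.sum_subset (Finset.range_subset_range.mpr hNn) fun j _ hj => ?_).symm
  simp [hb j (by simpa using hj)]

lemma boolVec_testBit_injOn (N : ℕ) : InjOn (fun n => boolVec N n.testBit) (Iio (2 ^ N)) := by
  intro a ha b hb h
  refine Nat.eq_of_testBit_eq fun j => ?_
  by_cases hj : j < N
  · exact boolVec_eq_boolVec_iff.mp h j hj
  · have hN : 2 ^ N ≤ 2 ^ j := Nat.pow_le_pow_right two_pos (not_lt.mp hj)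
    rw [Nat.testBit_eq_false_of_lt (lt_of_lt_of_le ha hN),
      Nat.testBit_eq_false_of_lt (lt_of_lt_of_le hb hN)]

def nodeVec (N : ℕ) (s : List Bool) : Fin N → ZMod 2 := boolVec N (s.getD · false)

lemma nodeVec_of_prefix {t u : List Bool} (h : t <+: u) :
    nodeVec t.length u = nodeVec t.length t := by
  obtain ⟨r, rfl⟩ := h
  funext j
  simp only [nodeVec, boolVec]
  rw [List.getD_append _ _ _ _ j.2]

lemma nodeVec_injOn (N : ℕ) : InjOn (nodeVec N) {s | s.length = N} := by
  intro s hs t ht h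
  rw [nodeVec, nodeVec, boolVec_eq_boolVec_iff] at h
  refine List.ext_getElem (hs.trans ht.symm) fun j hjs hjt => ?_
  have hj := h j (hs ▸ hjs)
  rwa [List.getD_eq_getElem _ _ hjs, List.getD_eq_getElem _ _ hjt] at hj

def levelParity (s : List Bool) : ZMod 2 :=
  boolVec s.length s.length.testBit ⬝ᵥ nodeVec s.length s

def parityColoring (s : List Bool) : Bool := decide (levelParity s = 1)

lemma levelParity_eq_of_parityColoring_eq {s t : List Bool}
    (h : parityColoring s = parityColoring t) : levelParity s = levelParity t := by
  have key : ∀ a b : ZMod 2, decide (a = 1) = decide (b = 1) → a = b := by decide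
  exact key _ _ h

lemma levelParity_eq_dotProduct {N : ℕ} {t u : List Bool} (htu : t <+: u) (htN : t.length = N)
    (hN : N ≤ u.length) (hu : u.length < 2 ^ N) :
    levelParity u = boolVec N u.length.testBit ⬝ᵥ nodeVec N t := by
  subst htN
  rw [levelParity, nodeVec, dotProduct_boolVec_of_le hN, ← nodeVec, nodeVec_of_prefix htu]
  intro j hj
  exact Nat.testBit_eq_false_of_lt (hu.trans_le (Nat.pow_le_pow_right two_pos hj))

def monochromaticLevels (c : List Bool → Bool) (q : Set (List Bool)) : Set ℕ :=
  {n | ∃ i : Bool, ∀ s ∈ q, s.length = n → c s = i}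

theorem ncard_treeLevel_mul_ncard_monochromaticLevels_le {q : Set (List Bool)} (hq : IsTree q)
    (K : ℕ) : (treeLevel q (K + 1)).ncard *
      (monochromaticLevels parityColoring q ∩ Ico (2 ^ K) (2 ^ (K + 1))).ncard ≤ 2 ^ (K + 1) := by
  have hKN : K + 1 ≤ 2 ^ K := Nat.lt_two_pow_self
  have h := ncard_mul_ncard_le_of_dotProduct_eq (S := nodeVec (K + 1) '' treeLevel q (K + 1))
    (T := (fun n => boolVec (K + 1) n.testBit) ''
      (monochromaticLevels parityColoring q ∩ Ico (2 ^ K) (2 ^ (K + 1)))) <| by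
    rintro _ ⟨n, ⟨⟨i, hi⟩, hlo, hhi⟩, rfl⟩ _ ⟨x, ⟨hx, hxN⟩, rfl⟩ _ ⟨y, ⟨hy, hyN⟩, rfl⟩
    obtain ⟨u, hu, hxu, rfl⟩ := hq.exists_extension hx (n := n) (by omega)
    obtain ⟨v, hv, hyv, hvn⟩ := hq.exists_extension hy (n := u.length) (by omega)
    have h := levelParity_eq_of_parityColoring_eq ((hi u hu rfl).trans (hi v hv hvn).symm)
    rwa [levelParity_eq_dotProduct hxu hxN (by omega) hhi,
      levelParity_eq_dotProduct hyv hyN (by omega) (by omega), hvn] at h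
  rwa [((nodeVec_injOn _).mono fun _ hs => hs.2).ncard_image,
    ((boolVec_testBit_injOn _).mono fun _ hn => hn.2.2).ncard_image,
    Nat.card_fun, Nat.card_zmod, Nat.card_eq_fintype_card, Fintype.card_fin] at h

lemma ncard_inter_Iio_le (A : Set ℕ) (n : ℕ) : (A ∩ Iio n).ncard ≤ n :=
  (ncard_le_ncard inter_subset_right (finite_Iio n)).trans (ncard_Iio_nat n).le

lemma mem_densityZero_of_subset {A B : Set ℕ} (hAB : A ⊆ B) (hB : B ∈ densityZero) :
    A ∈ densityZero := by
  refine squeeze_zero (fun n => by positivity) (fun n => ?_) hB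
  have h := ncard_le_ncard (inter_subset_inter_left (Iio n) hAB)
    ((finite_Iio n).subset inter_subset_right)
  gcongr

theorem ncard_inter_Iio_two_pow_le {A : Set ℕ} {ε : ℝ} {K₀ : ℕ} (hε : 0 ≤ ε)
    (hA : ∀ K ≥ K₀, ((A ∩ Ico (2 ^ K) (2 ^ (K + 1))).ncard : ℝ) ≤ ε * 2 ^ K)
    {L : ℕ} (hL : K₀ ≤ L) : ((A ∩ Iio (2 ^ L)).ncard : ℝ) ≤ 2 ^ K₀ + ε * 2 ^ L := by
  induction L, hL using Nat.le_induction with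
  | base =>
    have h : ((A ∩ Iio (2 ^ K₀)).ncard : ℝ) ≤ 2 ^ K₀ := by
      exact_mod_cast ncard_inter_Iio_le A _
    have := mul_nonneg hε (pow_nonneg zero_le_two K₀)
    linarith
  | succ L hL ih =>
    have hsplit : A ∩ Iio (2 ^ (L + 1)) = (A ∩ Iio (2 ^ L)) ∪ (A ∩ Ico (2 ^ L) (2 ^ (L + 1))) := by
      rw [← inter_union_distrib_left, Iio_union_Ico_eq_Iio (Nat.pow_le_pow_right two_pos L.le_succ)]
    have hunion : ((A ∩ Iio (2 ^ (L + 1))).ncard : ℝ) ≤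
        (A ∩ Iio (2 ^ L)).ncard + (A ∩ Ico (2 ^ L) (2 ^ (L + 1))).ncard := by
      rw [hsplit]
      exact_mod_cast ncard_union_le _ _
    rw [pow_succ (2 : ℝ) L, ← mul_assoc]
    linarith [hA L hL]

theorem mem_densityZero_of_dyadic {A : Set ℕ}
    (hA : ∀ ε > 0, ∀ᶠ K in atTop, ((A ∩ Ico (2 ^ K) (2 ^ (K + 1))).ncard : ℝ) ≤ ε * 2 ^ K) :
    A ∈ densityZero := by
  refine tendsto_order.2 ⟨fun a ha => .of_forall fun n => ha.trans_le (by positivity),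
    fun a ha => ?_⟩
  obtain ⟨K₀, hK₀⟩ := eventually_atTop.1 (hA (a / 4) (by positivity))
  have hcount : ∀ n ≥ 2 ^ K₀, ((A ∩ Iio n).ncard : ℝ) ≤ 2 ^ K₀ + a / 2 * n := by
    intro n hn
    have hn₀ : n ≠ 0 := (Nat.pos_of_ne_zero (by positivity)).trans_le hn |>.ne'
    set L := Nat.log 2 n + 1
    have hnL : n < 2 ^ L := Nat.lt_pow_succ_log_self one_lt_two n
    have hLn : (2 : ℝ) ^ L ≤ 2 * n := by
      rw [pow_succ, mul_comm]
      exact_mod_cast Nat.mul_le_mul_left 2 (Nat.pow_log_le_self 2 hn₀)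
    have hK₀L : K₀ ≤ L := ((Nat.pow_lt_pow_iff_right one_lt_two).1 (hn.trans_lt hnL)).le
    have hmono : ((A ∩ Iio n).ncard : ℝ) ≤ (A ∩ Iio (2 ^ L)).ncard := by
      exact_mod_cast ncard_le_ncard (inter_subset_inter_right A (Iio_subset_Iio hnL.le))
        ((finite_Iio _).subset inter_subset_right)
    have := ncard_inter_Iio_two_pow_le (by positivity) hK₀ hK₀L
    have := mul_le_mul_of_nonneg_left hLn (by positivity : (0 : ℝ) ≤ a / 4)
    linarith
  filter_upwards [eventually_ge_atTop (max (2 ^ K₀) 1),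
    (tendsto_const_div_atTop_nhds_zero_nat ((2 : ℝ) ^ K₀)).eventually (gt_mem_nhds (half_pos ha))]
    with n hn hsmall
  have hnpos : (0 : ℝ) < n := by exact_mod_cast (le_max_right _ _).trans hn
  calc ((A ∩ Iio n).ncard : ℝ) / n ≤ (2 ^ K₀ + a / 2 * n) / n := by
        gcongr
        exact hcount n ((le_max_left _ _).trans hn)
    _ = 2 ^ K₀ / n + a / 2 := by field_simp
    _ < a := by linarith

theorem monochromaticLevels_parityColoring_mem_densityZero {q : Set (List Bool)}
    (hq : IsPerfectTree q) : monochromaticLevels parityColoring q ∈ densityZero := by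
  refine mem_densityZero_of_dyadic fun ε hε => ?_
  filter_upwards [(hq.tendsto_ncard_treeLevel.comp (tendsto_add_atTop_nat 1)).eventually_ge_atTop
    ⌈2 / ε⌉₊] with K hK
  have hbound : ((treeLevel q (K + 1)).ncard : ℝ) *
      (monochromaticLevels parityColoring q ∩ Ico (2 ^ K) (2 ^ (K + 1))).ncard ≤ 2 * 2 ^ K := by
    rw [← pow_succ']
    exact_mod_cast ncard_treeLevel_mul_ncard_monochromaticLevels_le hq.1 K
  have hlevel : 2 / ε ≤ ((treeLevel q (K + 1)).ncard : ℝ) :=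
    (Nat.le_ceil _).trans (by exact_mod_cast hK)
  calc ((monochromaticLevels parityColoring q ∩ Ico (2 ^ K) (2 ^ (K + 1))).ncard : ℝ)
      = 2 / ε * (monochromaticLevels parityColoring q ∩ Ico (2 ^ K) (2 ^ (K + 1))).ncard *
          (ε / 2) := by field_simp
    _ ≤ 2 * 2 ^ K * (ε / 2) := mul_le_mul_of_nonneg_right
        ((mul_le_mul_of_nonneg_right hlevel (Nat.cast_nonneg _)).trans hbound) (by positivity)
    _ = ε * 2 ^ K := by ring

/-- There are a perfect tree `p` and a coloring `c` of its nodes such that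
`H_c(q)` has density zero for every perfect subtree `q ⊆ p`; consequently,
the density zero ideal is not HL. -/
theorem stmt16 :
    (∃ (p : Set (List Bool)) (c : List Bool → Bool), IsPerfectTree p ∧
      ∀ q : Set (List Bool), IsPerfectTree q → q ⊆ p →
        {n : ℕ | ∃ i : Bool, ∀ s ∈ q, s.length = n → c s = i} ∈ densityZero) ∧
    ¬ IsHLIdeal densityZero := by
  refine ⟨⟨univ, parityColoring, isPerfectTree_univ, fun q hq _ =>
    monochromaticLevels_parityColoring_mem_densityZero hq⟩, fun hHL => ?_⟩
  obtain ⟨p, A, ⟨hA, -⟩, hp, i, hi⟩ := hHL parityColoring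
  refine hA (mem_densityZero_of_subset (fun n hn => ?_)
    (monochromaticLevels_parityColoring_mem_densityZero hp))
  exact ⟨i, fun s hs hsn => hi s ⟨hs, hsn ▸ hn⟩⟩
end

section
/- Every Halpern–Läuchli ultrafilter is a Z-ultrafilter: if U is an ultrafilter on ω that is a Halpern–Läuchli family, then Z is not Katětov below the dual ideal U^*; that is, there is no function f : ω → ω such that f⁻¹[A] ∈ U^* for every A ∈ Z (equivalently, for every f : ω → ω there exists U ∈ U with f⁻¹[some density zero set] ⊇ U, i.e., there exists A ∈ Z with f⁻¹[A] ∈ U). -/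
/-!
Given `f : ℕ → ℕ`, colour a node `s` by the parity of its inner product over `𝔽₂` with the binary
digits of `f |s|`. If the colouring is constant on `p↾A` for a perfect tree `p`, then for `n ∈ A`
with `f n < 2 ^ n` the linear functional given by the digits of `f n` is constant on level `n` of
`p`, hence on every level `K` with `f n < 2 ^ K`. By duality, the functionals on `𝔽₂ ^ K` that are
constant on a set `X` number at most `2 ^ K / |X|`, and the levels of a perfect tree grow without
bound, so these values of `f` form a density zero set; so do the values `f n ≥ 2 ^ n`. Thus `f`
maps `A ∈ U` into a density zero set `D`, and `f⁻¹[D]` cannot lie in `U^*`.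
-/

open Set

open Filter

theorem Module.Dual.card_constOn_mul_card_le {K V : Type*} [Field K] [Finite K]
    [AddCommGroup V] [Module K V] [FiniteDimensional K V] {X : Set V} (hX : X.Nonempty) :
    Nat.card {φ : Module.Dual K V // ∀ x ∈ X, ∀ y ∈ X, φ x = φ y} * Nat.card X ≤
      Nat.card V := by
  have : Finite V := Module.finite_of_finite K
  obtain ⟨x₀, hx₀⟩ := hX
  set D : Submodule K V := Submodule.span K ((· - x₀) '' X)
  have hconst : ∀ φ : Module.Dual K V,
      (∀ x ∈ X, ∀ y ∈ X, φ x = φ y) ↔ φ ∈ D.dualAnnihilator := by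
    intro φ
    rw [Submodule.mem_dualAnnihilator]
    change _ ↔ D ≤ LinearMap.ker φ
    simp only [D, Submodule.span_le, Set.image_subset_iff]
    refine ⟨fun h x hx => by simp [h x hx x₀ hx₀], fun h x hx y hy => ?_⟩
    have hx' := h hx
    have hy' := h hy
    simp only [Set.mem_preimage, SetLike.mem_coe, LinearMap.mem_ker, map_sub] at hx' hy'
    rw [sub_eq_zero.1 hx', sub_eq_zero.1 hy']
  have hX : Nat.card X ≤ Nat.card D :=
    Nat.card_le_card_of_injective (fun x => ⟨x - x₀, Submodule.subset_span ⟨x, x.2, rfl⟩⟩)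
      fun x y h => Subtype.ext (sub_left_inj.1 (congrArg Subtype.val h))
  calc Nat.card {φ : Module.Dual K V // ∀ x ∈ X, ∀ y ∈ X, φ x = φ y} * Nat.card X
      = Nat.card (V ⧸ D) * Nat.card X := by
        rw [Nat.card_congr ((Equiv.subtypeEquivRight hconst).trans
          (Subspace.quotEquivAnnihilator D).toEquiv.symm)]
    _ ≤ Nat.card (V ⧸ D) * Nat.card D := Nat.mul_le_mul_left _ hX
    _ = Nat.card V := by rw [D.card_eq_card_quotient_mul_card, mul_comm]

theorem union_mem_densityZero {A B : Set ℕ} (hA : A ∈ densityZero) (hB : B ∈ densityZero) :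
    A ∪ B ∈ densityZero := by
  have hle : ∀ n : ℕ, (((A ∪ B) ∩ Iio n).ncard : ℝ) / n ≤
      ((A ∩ Iio n).ncard : ℝ) / n + ((B ∩ Iio n).ncard : ℝ) / n := fun n => by
    rw [← add_div, union_inter_distrib_right]
    gcongr
    exact_mod_cast ncard_union_le _ _
  have hAB := hA.add hB
  rw [add_zero] at hAB
  exact tendsto_of_tendsto_of_tendsto_of_le_of_le tendsto_const_nhds hAB
    (fun n => div_nonneg (Nat.cast_nonneg _) (Nat.cast_nonneg _)) hle

theorem mem_densityZero_of_eventually_ncard_le {A : Set ℕ}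
    (h : ∀ ε > 0, ∀ᶠ K in atTop, ((A ∩ Iio (2 ^ K)).ncard : ℝ) ≤ ε * 2 ^ K) :
    A ∈ densityZero := by
  refine tendsto_order.2 ⟨fun a ha => .of_forall fun n =>
    ha.trans_le (div_nonneg (Nat.cast_nonneg _) (Nat.cast_nonneg _)), fun a ha => ?_⟩
  obtain ⟨K₀, hK₀⟩ := eventually_atTop.1 (h (a / 4) (by positivity))
  filter_upwards [eventually_ge_atTop (2 ^ K₀)] with N hN
  have hN0 : N ≠ 0 := (Nat.two_pow_pos K₀).trans_le hN |>.ne'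
  set M := Nat.log 2 N
  have hM : K₀ ≤ M := Nat.le_log_of_pow_le one_lt_two hN
  have h2M : ((2 : ℕ) ^ M : ℝ) ≤ N := by exact_mod_cast Nat.pow_log_le_self 2 hN0
  have hcount : ((A ∩ Iio N).ncard : ℝ) ≤ (A ∩ Iio (2 ^ (M + 1))).ncard := by
    exact_mod_cast ncard_le_ncard
      (inter_subset_inter_right _ (Iio_subset_Iio (Nat.lt_pow_succ_log_self one_lt_two N).le))
      ((finite_Iio _).inter_of_right _)
  have hNpos : (0 : ℝ) < N := by exact_mod_cast Nat.pos_of_ne_zero hN0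
  rw [div_lt_iff₀ hNpos]
  calc ((A ∩ Iio N).ncard : ℝ) ≤ a / 4 * 2 ^ (M + 1) := hcount.trans (hK₀ _ (by omega))
    _ = a / 2 * (2 : ℕ) ^ M := by push_cast; ring
    _ ≤ a / 2 * N := by gcongr
    _ < a * N := by linarith [mul_pos ha hNpos]

theorem image_setOf_two_pow_le_mem_densityZero (f : ℕ → ℕ) :
    f '' {n | 2 ^ n ≤ f n} ∈ densityZero := by
  refine mem_densityZero_of_eventually_ncard_le fun ε hε => ?_
  have hlim := tendsto_pow_const_div_const_pow_of_one_lt 1 (one_lt_two (α := ℝ))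
  filter_upwards [hlim.eventually (gt_mem_nhds hε)] with K hK
  have hsub : f '' {n | 2 ^ n ≤ f n} ∩ Iio (2 ^ K) ⊆ f '' Iio K := by
    rintro _ ⟨⟨n, hn, rfl⟩, hnK⟩
    exact ⟨n, (Nat.pow_lt_pow_iff_right one_lt_two).1 (hn.trans_lt hnK), rfl⟩
  have hcard : ((f '' {n | 2 ^ n ≤ f n} ∩ Iio (2 ^ K)).ncard : ℝ) ≤ K := by
    exact_mod_cast ((ncard_le_ncard hsub ((finite_Iio K).image f)).trans
      (ncard_image_le (finite_Iio K))).trans (by simp)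
  rw [pow_one, div_lt_iff₀ (by positivity)] at hK
  linarith

theorem mem_restrictTree_singleton {p : Set (List Bool)} {n : ℕ} {s : List Bool} :
    s ∈ restrictTree p {n} ↔ s ∈ p ∧ s.length = n :=
  Iff.rfl

theorem restrictTree_singleton_finite (p : Set (List Bool)) (n : ℕ) :
    (restrictTree p {n}).Finite :=
  (List.finite_length_eq Bool n).subset fun _ hs => hs.2

namespace IsTree

variable {p : Set (List Bool)}

theorem exists_prefix_le_length (hp : IsTree p) {s : List Bool} (hs : s ∈ p) (k : ℕ) :
    ∃ t ∈ p, s <+: t ∧ k ≤ t.length := by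
  induction k with
  | zero => exact ⟨s, hs, List.prefix_refl s, Nat.zero_le _⟩
  | succ k ih =>
    obtain ⟨t, ht, hst, hk⟩ := ih
    obtain ⟨u, hu, htu, hne⟩ := hp.2.2 t ht
    have : t.length < u.length :=
      htu.length_le.lt_of_ne fun h => hne (htu.eq_of_length h)
    exact ⟨u, hu, hst.trans htu, by omega⟩

theorem exists_prefix_length_eq (hp : IsTree p) {s : List Bool} (hs : s ∈ p) {L : ℕ}
    (hL : s.length ≤ L) : ∃ t ∈ p, s <+: t ∧ t.length = L := by
  obtain ⟨t, ht, hst, hLt⟩ := hp.exists_prefix_le_length hs L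
  refine ⟨t.take L, hp.2.1 t ht _ (List.take_prefix L t), ?_, by simp [hLt]⟩
  rw [List.prefix_iff_eq_take.1 hst]
  exact List.take_prefix_take_left hL

theorem image_take_restrictTree (hp : IsTree p) {n L : ℕ} (hnL : n ≤ L) :
    List.take n '' restrictTree p {L} = restrictTree p {n} := by
  ext s
  constructor
  · rintro ⟨t, ⟨ht, rfl⟩, rfl⟩
    exact ⟨hp.2.1 t ht _ (List.take_prefix _ t), by simp [hnL]⟩
  · rintro ⟨hs, rfl⟩
    obtain ⟨t, ht, hst, rfl⟩ := hp.exists_prefix_length_eq hs hnL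
    exact ⟨t, ⟨ht, rfl⟩, (List.prefix_iff_eq_take.1 hst).symm⟩

theorem ncard_restrictTree_mono (hp : IsTree p) :
    Monotone fun n => (restrictTree p {n}).ncard := fun n L hnL => by
  dsimp only
  rw [← hp.image_take_restrictTree hnL]
  exact ncard_image_le (restrictTree_singleton_finite p L)

theorem restrictTree_singleton_nonempty (hp : IsTree p) (n : ℕ) :
    (restrictTree p {n}).Nonempty := by
  obtain ⟨s, hs⟩ := hp.1
  obtain ⟨t, ht, -, hn⟩ := hp.exists_prefix_length_eq (hp.2.1 s hs [] List.nil_prefix)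
    (Nat.zero_le n)
  exact ⟨t, ht, hn⟩

end IsTree

namespace IsPerfectTree

variable {p : Set (List Bool)}

/-- The two incomparable extensions of a node of level `n`, prolonged to a common level `L`,
are identified by `List.take n`, which maps level `L` onto level `n`. -/
theorem exists_ncard_lt (hp : IsPerfectTree p) (n : ℕ) :
    ∃ L, (restrictTree p {n}).ncard < (restrictTree p {L}).ncard := by
  obtain ⟨s, hs, rfl⟩ := hp.1.restrictTree_singleton_nonempty n
  obtain ⟨t₀, ht₀, t₁, ht₁, hst₀, hst₁, h01, h10⟩ := hp.2 s hs
  set L := max t₀.length t₁.length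
  obtain ⟨w₀, hw₀, htw₀, hw₀L⟩ := hp.1.exists_prefix_length_eq ht₀ (le_max_left _ _)
  obtain ⟨w₁, hw₁, htw₁, hw₁L⟩ := hp.1.exists_prefix_length_eq ht₁ (le_max_right _ _)
  have hsL : s.length ≤ L := hst₀.length_le.trans (le_max_left _ _)
  refine ⟨L, ?_⟩
  rw [← hp.1.image_take_restrictTree hsL]
  refine (ncard_image_le (restrictTree_singleton_finite p L)).lt_of_ne fun h => ?_
  have hw : w₀ = w₁ := injOn_of_ncard_image_eq h (restrictTree_singleton_finite p L)
    ⟨hw₀, hw₀L⟩ ⟨hw₁, hw₁L⟩ (by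
      rw [← List.prefix_iff_eq_take.1 (hst₀.trans htw₀),
        ← List.prefix_iff_eq_take.1 (hst₁.trans htw₁)])
  subst hw
  rcases List.prefix_or_prefix_of_prefix htw₀ htw₁ with h | h
  exacts [h01 h, h10 h]

theorem tendsto_ncard_restrictTree (hp : IsPerfectTree p) :
    Tendsto (fun n => (restrictTree p {n}).ncard) atTop atTop := by
  refine tendsto_atTop_atTop_of_monotone hp.1.ncard_restrictTree_mono fun r => ?_
  induction r with
  | zero => exact ⟨0, Nat.zero_le _⟩
  | succ r ih =>
    obtain ⟨n, hn⟩ := ih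
    obtain ⟨L, hL⟩ := hp.exists_ncard_lt n
    exact ⟨L, by omega⟩

end IsPerfectTree

def bitVec (K : ℕ) (b : ℕ → Bool) : Fin K → ZMod 2 := fun q => (b q).toNat

theorem eq_of_bitVec_eq {K : ℕ} {b b' : ℕ → Bool} (h : bitVec K b = bitVec K b') {q : ℕ}
    (hq : q < K) : b q = b' q := by
  have key : ∀ x y : Bool, ((x.toNat : ℕ) : ZMod 2) = y.toNat → x = y := by decide
  exact key _ _ (congrFun h ⟨q, hq⟩)

def binaryPairing (s : List Bool) (m : ℕ) : ZMod 2 :=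
  ∑ q ∈ Finset.range s.length, ((s.getD q false).toNat : ZMod 2) * (m.testBit q).toNat

theorem binaryPairing_eq_dotProduct {s : List Bool} {K : ℕ} (hs : s.length = K) (m : ℕ) :
    binaryPairing s m = bitVec K (s.getD · false) ⬝ᵥ bitVec K m.testBit := by
  rw [binaryPairing, hs, ← Fin.sum_univ_eq_sum_range]
  rfl

theorem binaryPairing_of_prefix {s t : List Bool} (hst : s <+: t) {m : ℕ}
    (hm : m < 2 ^ s.length) : binaryPairing t m = binaryPairing s m := by
  obtain ⟨r, rfl⟩ := hst
  rw [binaryPairing, binaryPairing, List.length_append, Finset.sum_range_add]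
  have htail : ∀ q ∈ Finset.range r.length,
      (((s ++ r).getD (s.length + q) false).toNat : ZMod 2) * (m.testBit (s.length + q)).toNat
        = 0 := fun q _ => by
    rw [Nat.testBit_lt_two_pow (hm.trans_le (Nat.pow_le_pow_right two_pos (by omega)))]
    simp
  rw [Finset.sum_eq_zero htail, add_zero]
  exact Finset.sum_congr rfl fun q hq => by
    rw [List.getD_append _ _ _ _ (Finset.mem_range.1 hq)]

theorem ncard_setOf_binaryPairing_const_mul_ncard_le {p : Set (List Bool)} (hp : IsTree p)
    (K : ℕ) :
    {m | m < 2 ^ K ∧ ∀ s ∈ restrictTree p {K}, ∀ t ∈ restrictTree p {K},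
      binaryPairing s m = binaryPairing t m}.ncard * (restrictTree p {K}).ncard ≤ 2 ^ K := by
  set vec : List Bool → Fin K → ZMod 2 := fun s => bitVec K (s.getD · false)
  set X := vec '' restrictTree p {K}
  have hvec : InjOn vec (restrictTree p {K}) := fun s hs t ht h =>
    List.ext_getElem (hs.2.trans ht.2.symm) fun q hqs hqt => by
      rw [← List.getD_eq_getElem (d := false), ← List.getD_eq_getElem (d := false)]
      exact eq_of_bitVec_eq h (hs.2 ▸ hqs)
  have hdigits : ∀ m m', m < 2 ^ K → m' < 2 ^ K →
      bitVec K m.testBit = bitVec K m'.testBit → m = m' := fun m m' hm hm' h =>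
    Nat.eq_of_testBit_eq fun q => by
      rcases lt_or_ge q K with hq | hq
      · exact eq_of_bitVec_eq h hq
      · rw [Nat.testBit_lt_two_pow (hm.trans_le (Nat.pow_le_pow_right two_pos hq)),
          Nat.testBit_lt_two_pow (hm'.trans_le (Nat.pow_le_pow_right two_pos hq))]
  have hconst : {m | m < 2 ^ K ∧ ∀ s ∈ restrictTree p {K}, ∀ t ∈ restrictTree p {K},
      binaryPairing s m = binaryPairing t m}.ncard ≤
      Nat.card {φ : Module.Dual (ZMod 2) (Fin K → ZMod 2) // ∀ x ∈ X, ∀ y ∈ X, φ x = φ y} := by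
    have : Finite (Module.Dual (ZMod 2) (Fin K → ZMod 2)) := Module.finite_of_finite (ZMod 2)
    rw [← Nat.card_coe_set_eq]
    refine Nat.card_le_card_of_injective
      (fun m => ⟨dotProductEquiv (ZMod 2) (Fin K) (bitVec K m.1.testBit), ?_⟩) ?_
    · rintro _ ⟨s, hs, rfl⟩ _ ⟨t, ht, rfl⟩
      change bitVec K m.1.testBit ⬝ᵥ vec s = bitVec K m.1.testBit ⬝ᵥ vec t
      rw [dotProduct_comm, ← binaryPairing_eq_dotProduct hs.2, dotProduct_comm,
        ← binaryPairing_eq_dotProduct ht.2]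
      exact m.2.2 s hs t ht
    · intro m m' h
      exact Subtype.ext (hdigits _ _ m.2.1 m'.2.1
        ((dotProductEquiv (ZMod 2) (Fin K)).injective (congrArg Subtype.val h)))
  calc _ ≤ Nat.card {φ : Module.Dual (ZMod 2) (Fin K → ZMod 2) // ∀ x ∈ X, ∀ y ∈ X, φ x = φ y}
        * Nat.card X := by
        rw [Nat.card_coe_set_eq, hvec.ncard_image]
        exact Nat.mul_le_mul_right _ hconst
    _ ≤ Nat.card (Fin K → ZMod 2) :=
        Module.Dual.card_constOn_mul_card_le ((hp.restrictTree_singleton_nonempty K).image vec)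
    _ = 2 ^ K := by simp

-- `Nat.size m` is the first level at which all binary digits of `m` are read.
def pairingConstant (p : Set (List Bool)) : Set ℕ :=
  {m | ∀ s ∈ restrictTree p {m.size}, ∀ t ∈ restrictTree p {m.size},
    binaryPairing s m = binaryPairing t m}

section pairingConstant

variable {p : Set (List Bool)}

theorem mem_pairingConstant_of_restrictTree (hp : IsTree p) {m n : ℕ} (hm : m < 2 ^ n)
    (h : ∀ s ∈ restrictTree p {n}, ∀ t ∈ restrictTree p {n},
      binaryPairing s m = binaryPairing t m) :
    m ∈ pairingConstant p := by
  have extend : ∀ s ∈ restrictTree p {m.size}, ∃ s' ∈ restrictTree p {n},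
      binaryPairing s m = binaryPairing s' m := fun s ⟨hs, hsm⟩ => by
    obtain ⟨s', hs', hss', hs'n⟩ :=
      hp.exists_prefix_length_eq hs ((mem_singleton_iff.1 hsm).trans_le (Nat.size_le.2 hm))
    exact ⟨s', ⟨hs', hs'n⟩,
      (binaryPairing_of_prefix hss' (mem_singleton_iff.1 hsm ▸ Nat.lt_size_self m)).symm⟩
  intro s hs t ht
  obtain ⟨s', hs', hss'⟩ := extend s hs
  obtain ⟨t', ht', htt'⟩ := extend t ht
  rw [hss', htt', h s' hs' t' ht']

theorem pairingConstant_inter_Iio_subset (hp : IsTree p) (K : ℕ) :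
    pairingConstant p ∩ Iio (2 ^ K) ⊆ {m | m < 2 ^ K ∧ ∀ s ∈ restrictTree p {K},
      ∀ t ∈ restrictTree p {K}, binaryPairing s m = binaryPairing t m} := by
  rintro m ⟨hm, hmK⟩
  have truncate : ∀ s ∈ restrictTree p {K}, s.take m.size ∈ restrictTree p {m.size} ∧
      binaryPairing s m = binaryPairing (s.take m.size) m := fun s ⟨hs, hsK⟩ => by
    have hlen : (s.take m.size).length = m.size := by
      simpa [mem_singleton_iff.1 hsK] using Nat.size_le.2 hmK
    exact ⟨⟨hp.2.1 s hs _ (List.take_prefix _ s), hlen⟩,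
      binaryPairing_of_prefix (List.take_prefix _ s) (by rw [hlen]; exact Nat.lt_size_self m)⟩
  refine ⟨hmK, fun s hs t ht => ?_⟩
  rw [(truncate s hs).2, (truncate t ht).2]
  exact hm _ (truncate s hs).1 _ (truncate t ht).1

theorem pairingConstant_mem_densityZero (hp : IsPerfectTree p) :
    pairingConstant p ∈ densityZero := by
  refine mem_densityZero_of_eventually_ncard_le fun ε hε => ?_
  obtain ⟨r, hr⟩ := exists_nat_gt ε⁻¹
  have hεr : 1 ≤ ε * r := by
    simpa [hε.ne'] using (mul_lt_mul_of_pos_left hr hε).le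
  filter_upwards [hp.tendsto_ncard_restrictTree.eventually_ge_atTop r] with K hK
  have hcount : ((pairingConstant p ∩ Iio (2 ^ K)).ncard : ℝ) * r ≤ 2 ^ K := by
    exact_mod_cast (Nat.mul_le_mul (ncard_le_ncard (pairingConstant_inter_Iio_subset hp.1 K)
      ((finite_Iio _).subset fun m hm => hm.1)) hK).trans
      (ncard_setOf_binaryPairing_const_mul_ncard_le hp.1 K)
  nlinarith [(Nat.cast_nonneg (α := ℝ) (pairingConstant p ∩ Iio (2 ^ K)).ncard)]

end pairingConstant

theorem stmt17_general (U : Ultrafilter ℕ)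
    (hHL : IsHLFamily {A : Set ℕ | A ∈ U}) :
    ¬ KatetovLE densityZero {A : Set ℕ | Aᶜ ∈ U} := by
  rintro ⟨f, hf⟩
  obtain ⟨p, A, hA, hp, i, hc⟩ := hHL fun s => decide (binaryPairing s (f s.length) = 0)
  have hZMod : ∀ a b : ZMod 2, decide (a = 0) = decide (b = 0) → a = b := by decide
  have hAD : A ⊆ f ⁻¹' (pairingConstant p ∪ f '' {n | 2 ^ n ≤ f n}) := by
    intro n hn
    by_cases hfn : 2 ^ n ≤ f n
    · exact Or.inr ⟨n, hfn, rfl⟩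
    refine Or.inl (mem_pairingConstant_of_restrictTree hp.1 (not_le.1 hfn) fun s hs t ht => ?_)
    obtain ⟨hsp, hsn⟩ := mem_restrictTree_singleton.1 hs
    obtain ⟨htp, htn⟩ := mem_restrictTree_singleton.1 ht
    have hcs := hc s ⟨hsp, hsn ▸ hn⟩
    have hct := hc t ⟨htp, htn ▸ hn⟩
    rw [hsn] at hcs
    rw [htn] at hct
    exact hZMod _ _ (hcs.trans hct.symm)
  have hD := union_mem_densityZero (pairingConstant_mem_densityZero hp)
    (image_setOf_two_pow_le_mem_densityZero f)
  exact Ultrafilter.compl_notMem_iff.2 (U.mem_of_superset hA hAD) (hf _ hD)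

/-- Every Halpern–Läuchli ultrafilter is a `Z`-ultrafilter. -/
theorem stmt17 (U : Ultrafilter ℕ) (hU : Filter.cofinite ≤ (U : Filter ℕ))
    (hHL : IsHLFamily {A : Set ℕ | A ∈ U}) :
    ¬ KatetovLE densityZero {A : Set ℕ | Aᶜ ∈ U} :=
  stmt17_general U hHL
end
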